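/- arXiv:1509.07670 — 11 statements merged into one kernel-verified Lean document; each statement's English description precedes it below -/
import Mathlib

section
/- Let f : ℤ → ℤ be a bijection such that |f(x) - f(y)| ≤ K·|x - y| and |x - y| ≤ L·|f(x) - f(y)| for all x, y ∈ ℤ, with K, L ≥ 1. Then either sup_{x ∈ ℤ} |f(x) - x| < ∞ or sup_{x ∈ ℤ} |f(x) + x| < ∞. -/
/-!
Call `f` coarsely increasing with constant `C` if `x + C < y` forces `f x < f y`. For such a
bijection, the preimages of the values in `(f a, f b]` lie in `[a - C, b + C]` and the points of
`(a + C, b - C)` are sent into `(f a, f b)`, so counting gives `|(f b - f a) - (b - a)| ≤ 2C + 1`.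

A bi-Lipschitz `f` with constants `K, L` is coarsely increasing or decreasing with `C = LK`: to the
right of `b + LK` the values `f z` stay more than `K` away from `f b` while moving by at most `K`
per step, so they never cross `f b`; and since `|f z - f b| ≥ (z - b) / L`, whether they lie above
or below decides whether `f` tends to `+∞` or `-∞`, which does not depend on `b`.
-/

open Finset Function

def CoarselyStrictMono (C : ℤ) (f : ℤ → ℤ) : Prop :=
  ∀ ⦃x y : ℤ⦄, x + C < y → f x < f y

namespace CoarselyStrictMono

variable {C : ℤ} {f : ℤ → ℤ}

lemma nonneg (hf : CoarselyStrictMono C f) : 0 ≤ C := by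
  by_contra hC
  exact lt_irrefl _ (@hf 0 0 (by omega))

lemma toNat_sub_le_of_surjective (hf : CoarselyStrictMono C f) (hs : Surjective f) (a b : ℤ) :
    (f b - f a).toNat ≤ (b - a + 2 * C + 1).toNat := by
  have hsurj : Set.SurjOn f (Icc (a - C) (b + C)) (Ioc (f a) (f b)) := by
    intro v hv
    obtain ⟨y, rfl⟩ := hs v
    simp only [coe_Ioc, Set.mem_Ioc] at hv
    have hay : a - C ≤ y := by
      by_contra h
      exact (hf (by omega : y + C < a)).not_ge hv.1.le
    have hyb : y ≤ b + C := by
      by_contra h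
      exact (hf (by omega : b + C < y)).not_ge hv.2
    exact ⟨y, by simp [hay, hyb], rfl⟩
  have := card_le_card_of_surjOn f hsurj
  rw [Int.card_Ioc, Int.card_Icc] at this
  omega

lemma toNat_sub_le_of_injective (hf : CoarselyStrictMono C f) (hi : Injective f) (a b : ℤ) :
    (b - a - 2 * C - 1).toNat ≤ (f b - f a - 1).toNat := by
  have hmaps : Set.MapsTo f (Ioo (a + C) (b - C)) (Ioo (f a) (f b)) := by
    intro y hy
    simp only [coe_Ioo, Set.mem_Ioo] at hy ⊢
    exact ⟨hf hy.1, hf (by omega)⟩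
  have := card_le_card_of_injOn f hmaps hi.injOn
  rw [Int.card_Ioo, Int.card_Ioo] at this
  omega

lemma abs_sub_sub_le (hf : CoarselyStrictMono C f) (hb : Bijective f) (a b : ℤ) :
    |(f b - b) - (f a - a)| ≤ 2 * C + 1 := by
  have := hf.nonneg
  -- `toNat` truncates at `0`, so each bound is informative only for one order of `a` and `b`.
  have := hf.toNat_sub_le_of_surjective hb.2 a b
  have := hf.toNat_sub_le_of_surjective hb.2 b a
  have := hf.toNat_sub_le_of_injective hb.1 a b
  have := hf.toNat_sub_le_of_injective hb.1 b a
  rw [abs_le]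
  omega

lemma exists_abs_sub_le (hf : CoarselyStrictMono C f) (hb : Bijective f) :
    ∃ M, ∀ x, |f x - x| ≤ M :=
  ⟨|f 0| + (2 * C + 1), fun x => by
    have := hf.abs_sub_sub_le hb 0 x
    rw [sub_zero] at this
    calc |f x - x| = |(f x - x - f 0) + f 0| := by ring_nf
      _ ≤ |f x - x - f 0| + |f 0| := abs_add_le _ _
      _ ≤ |f 0| + (2 * C + 1) := by linarith⟩

end CoarselyStrictMono

section BiLipschitz

variable {f : ℤ → ℤ} {K L : ℤ}

lemma lt_abs_sub_of_add_mul_lt (hL : 0 ≤ L) (hLipInv : ∀ x y : ℤ, |x - y| ≤ L * |f x - f y|)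
    {b z : ℤ} (hz : b + L * K < z) : K < |f z - f b| := by
  by_contra! h
  have := hLipInv z b
  have := mul_le_mul_of_nonneg_left h hL
  have := le_abs_self (z - b)
  linarith

lemma lt_iff_lt_succ_of_add_mul_lt (hL : 0 ≤ L)
    (hLip : ∀ x y : ℤ, |f x - f y| ≤ K * |x - y|)
    (hLipInv : ∀ x y : ℤ, |x - y| ≤ L * |f x - f y|)
    {b z : ℤ} (hz : b + L * K < z) : f b < f z ↔ f b < f (z + 1) := by
  have hfz := lt_abs_sub_of_add_mul_lt hL hLipInv hz
  have hfz' := lt_abs_sub_of_add_mul_lt hL hLipInv (by omega : b + L * K < z + 1)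
  have hstep := hLip (z + 1) z
  rw [add_sub_cancel_left, abs_one, mul_one, abs_le] at hstep
  rw [lt_abs] at hfz hfz'
  omega

lemma ray_above_or_below (hL : 0 ≤ L)
    (hLip : ∀ x y : ℤ, |f x - f y| ≤ K * |x - y|)
    (hLipInv : ∀ x y : ℤ, |x - y| ≤ L * |f x - f y|) (b : ℤ) :
    (∀ z, b + L * K < z → f b < f z) ∨ (∀ z, b + L * K < z → f z < f b) := by
  have hside : ∀ z, b + L * K < z → (f b < f z ↔ f b < f (b + L * K + 1)) := by
    intro z hz
    induction z, (by omega : b + L * K + 1 ≤ z) using Int.leInduction with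
    | base => rfl
    | succ z hz' ih =>
      rw [← lt_iff_lt_succ_of_add_mul_lt hL hLip hLipInv (by omega), ih (by omega)]
  by_cases h : f b < f (b + L * K + 1)
  · exact .inl fun z hz => (hside z hz).2 h
  · have hK : 0 ≤ K := (abs_nonneg _).trans (by simpa using hLip 1 0)
    refine .inr fun z hz => ?_
    have := lt_abs_sub_of_add_mul_lt hL hLipInv hz
    rw [lt_abs] at this
    have := (hside z hz).not.2 h
    omega

lemma not_ray_above_and_below (hLipInv : ∀ x y : ℤ, |x - y| ≤ L * |f x - f y|) {C b b' : ℤ}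
    (habove : ∀ z, b + C < z → f b < f z) (hbelow : ∀ z, b' + C < z → f z < f b') : False := by
  have hlarge : ∀ᶠ z in Filter.atTop,
      b + C < z ∧ b' + C < z ∧ b + b' + L * (f b' - f b) < 2 * z := by
    filter_upwards [Filter.eventually_gt_atTop (b + C), Filter.eventually_gt_atTop (b' + C),
      Filter.eventually_gt_atTop (b + b' + L * (f b' - f b)), Filter.eventually_ge_atTop 0]
      with z h₁ h₂ h₃ h₄ using ⟨h₁, h₂, by omega⟩
  obtain ⟨z, hzb, hzb', hz⟩ := hlarge.exists
  have h := (le_abs_self (z - b)).trans (hLipInv z b)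
  have h' := (le_abs_self (z - b')).trans (hLipInv z b')
  rw [abs_of_pos (sub_pos.2 (habove z hzb))] at h
  rw [abs_of_neg (sub_neg.2 (hbelow z hzb'))] at h'
  nlinarith

lemma coarselyStrictMono_or_neg (hL : 0 ≤ L)
    (hLip : ∀ x y : ℤ, |f x - f y| ≤ K * |x - y|)
    (hLipInv : ∀ x y : ℤ, |x - y| ≤ L * |f x - f y|) :
    CoarselyStrictMono (L * K) f ∨ CoarselyStrictMono (L * K) (-f) := by
  have hside := ray_above_or_below hL hLip hLipInv
  rcases hside 0 with habove₀ | hbelow₀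
  · refine .inl fun x y hxy => ?_
    rcases hside x with habove | hbelow
    · exact habove y hxy
    · exact (not_ray_above_and_below hLipInv habove₀ hbelow).elim
  · refine .inr fun x y hxy => ?_
    rcases hside x with habove | hbelow
    · exact (not_ray_above_and_below hLipInv habove hbelow₀).elim
    · exact neg_lt_neg (hbelow y hxy)

end BiLipschitz

theorem biLipschitz_bijection_int_bounded_dist_general
    (f : ℤ → ℤ) (hf : Function.Bijective f) (K L : ℤ)
    (hL : 1 ≤ L)
    (hLip : ∀ x y : ℤ, |f x - f y| ≤ K * |x - y|)
    (hLipInv : ∀ x y : ℤ, |x - y| ≤ L * |f x - f y|) :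
    (∃ M : ℤ, ∀ x : ℤ, |f x - x| ≤ M) ∨ (∃ M : ℤ, ∀ x : ℤ, |f x + x| ≤ M) := by
  rcases coarselyStrictMono_or_neg (by omega) hLip hLipInv with hmono | hanti
  · exact .inl (hmono.exists_abs_sub_le hf)
  · obtain ⟨M, hM⟩ := hanti.exists_abs_sub_le (neg_involutive.bijective.comp hf)
    refine .inr ⟨M, fun x => ?_⟩
    rw [← abs_neg, neg_add']
    exact hM x

/-- Every bi-Lipschitz bijection of ℤ is at bounded distance from
the identity or from the reflection. -/
theorem biLipschitz_bijection_int_bounded_dist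
    (f : ℤ → ℤ) (hf : Function.Bijective f) (K L : ℤ)
    (hK : 1 ≤ K) (hL : 1 ≤ L)
    (hLip : ∀ x y : ℤ, |f x - f y| ≤ K * |x - y|)
    (hLipInv : ∀ x y : ℤ, |x - y| ≤ L * |f x - f y|) :
    (∃ M : ℤ, ∀ x : ℤ, |f x - x| ≤ M) ∨ (∃ M : ℤ, ∀ x : ℤ, |f x + x| ≤ M) :=
  biLipschitz_bijection_int_bounded_dist_general f hf K L hL hLip hLipInv
end

section
/- Let f : ℤ → ℤ be a bijection with |f(x)-f(y)| ≤ K|x-y| and |f⁻¹(u)-f⁻¹(v)| ≤ L|u-v| for all arguments, and set C = K·L. Fix x ∈ ℤ. If y ∈ ℤ satisfies y ≠ f(x), y ∈ f((-∞, x]) and y + 1 ∉ f((-∞, x]), then |f(x) - y - 1/2| ≤ C/2 (equivalently, 2|2f(x) - 2y - 1| ≤ 2C). -/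
/-- A "change point" `y` (with `y` in the image of `(-∞,x]` and `y+1` not) lies
within C/2 of f(x) - 1/2, i.e. |2f(x) - 2y - 1| ≤ C with C = K·L. -/
theorem biLipschitz_change_point_close
    (f g : ℤ → ℤ) (hfg : Function.LeftInverse g f) (hgf : Function.RightInverse g f)
    (K L : ℤ)
    (hLip : ∀ x y : ℤ, |f x - f y| ≤ K * |x - y|)
    (hLipInv : ∀ u v : ℤ, |g u - g v| ≤ L * |u - v|)
    (x y : ℤ) (hy : y ≠ f x)
    (hyIn : y ∈ f '' {z : ℤ | z ≤ x})
    (hyOut : y + 1 ∉ f '' {z : ℤ | z ≤ x}) :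
    |2 * f x - 2 * y - 1| ≤ K * L := by
  obtain ⟨z, hzx, hfz⟩ := hyIn
  have hzx : z ≤ x := hzx
  set w := g (y + 1) with hw
  have hfw : f w = y + 1 := hgf (y + 1)
  have hxw : x < w := by
    by_contra h
    push_neg at h
    exact hyOut ⟨w, h, hfw⟩
  have hzlt : z < x := by
    rcases lt_or_eq_of_le hzx with h | h
    · exact h
    · exact absurd (h ▸ hfz).symm hy
  have hgy : g y = z := by rw [← hfz, hfg]
  have hwz : w - z ≤ L := by
    have h1 := hLipInv (y + 1) y
    rw [hgy, ← hw] at h1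
    simp at h1
    calc w - z ≤ |w - z| := le_abs_self _
    _ ≤ L := by linarith
  have hK : 0 ≤ K := by
    have h0 := hLip 1 0
    have := abs_nonneg (f 1 - f 0)
    norm_num at h0
    linarith
  have h2 := hLip x z
  rw [hfz, abs_of_pos (by linarith : (0:ℤ) < x - z)] at h2
  have h3 := hLip x w
  rw [hfw, abs_of_neg (by linarith : x - w < 0)] at h3
  have habs : |2 * f x - 2 * y - 1| ≤ |f x - y| + |f x - (y + 1)| := by
    have he : 2 * f x - 2 * y - 1 = (f x - y) + (f x - (y + 1)) := by ring
    rw [he]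
    exact abs_add_le _ _
  nlinarith [h2, h3, hwz, hK, habs]
end

section
/- Let f : ℤ → ℤ be a bi-Lipschitz bijection with C = Lip(f)·Lip(f⁻¹). For every x ∈ ℤ, one of the following holds: (a) {n : n ≤ f(x) - C/2} ⊆ f({z : z ≤ x}) ⊆ {n : n ≤ f(x) + C/2}, or (b) {n : n ≥ f(x) + C/2} ⊆ f({z : z ≤ x}) ⊆ {n : n ≥ f(x) - C/2}. Moreover the same alternative (a) or (b) holds for all x simultaneously. -/
private lemma biLip_interval_bdd (f : ℤ → ℤ) (a : ℤ) :
    ∀ b : ℤ, ∃ C : ℤ, ∀ s : ℤ, a ≤ s → s ≤ b → f s ≤ C := by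
  have key : ∀ b : ℤ, a ≤ b → ∃ C : ℤ, ∀ s : ℤ, a ≤ s → s ≤ b → f s ≤ C := by
    refine Int.le_induction ?_ ?_
    · exact ⟨f a, fun s h1 h2 => le_of_eq (congrArg f (le_antisymm h2 h1))⟩
    · rintro b hb ⟨C, hC⟩
      refine ⟨max C (f (b + 1)), fun s h1 h2 => ?_⟩
      rcases lt_or_ge s (b + 1) with h | h
      · exact le_trans (hC s h1 (by omega)) (le_max_left _ _)
      · have hs : s = b + 1 := le_antisymm h2 h
        rw [hs]; exact le_max_right _ _
  intro b
  rcases le_or_gt a b with hab | hab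
  · exact key b hab
  · exact ⟨0, fun s h1 h2 => absurd (le_trans h1 h2) (not_le.mpr hab)⟩

private lemma biLip_core_left (f g : ℤ → ℤ) (hfg : Function.LeftInverse g f)
    (hgf : Function.RightInverse g f) (K L : ℤ)
    (hLip : ∀ x y : ℤ, |f x - f y| ≤ K * |x - y|)
    (hLipInv : ∀ u v : ℤ, |g u - g v| ≤ L * |u - v|)
    (hK : 1 ≤ K)
    (z w : ℤ) (hzw : z < w) (hdom : ∀ s : ℤ, s ≤ w → f s ≤ f z) :
    2 * (f z - f w) + 1 ≤ K * L := by
  set p := g (f z + 1) with hp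
  have hfp : f p = f z + 1 := hgf _
  have hpw : w < p := by
    by_contra h
    push_neg at h
    have := hdom p h
    omega
  have h1 : f z + 1 - f w ≤ K * (p - w) := by
    have h := hLip p w
    rw [hfp] at h
    have habs : |p - w| = p - w := abs_of_pos (by omega)
    rw [habs] at h
    linarith [le_abs_self (f z + 1 - f w)]
  have h2 : f z - f w ≤ K * (w - z) := by
    have h := hLip z w
    have habs : |z - w| = w - z := by
      rw [abs_of_neg (show z - w < 0 by omega)]; ring
    rw [habs] at h
    linarith [le_abs_self (f z - f w)]
  have h3 : p - z ≤ L := by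
    have h := hLipInv (f z + 1) (f z)
    rw [hfg z] at h
    have habs : |f z + 1 - f z| = 1 := by norm_num
    rw [habs, mul_one] at h
    linarith [le_abs_self (p - z)]
  have h4 : K * (p - z) ≤ K * L := mul_le_mul_of_nonneg_left h3 (by omega)
  nlinarith

private lemma biLip_core_right (f g : ℤ → ℤ) (hfg : Function.LeftInverse g f)
    (hgf : Function.RightInverse g f) (K L : ℤ)
    (hLip : ∀ x y : ℤ, |f x - f y| ≤ K * |x - y|)
    (hLipInv : ∀ u v : ℤ, |g u - g v| ≤ L * |u - v|)
    (hK : 1 ≤ K)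
    (z w : ℤ) (hzw : z < w) (hdom : ∀ s : ℤ, z ≤ s → f s ≤ f w) :
    2 * (f w - f z) + 1 ≤ K * L := by
  set p := g (f w + 1) with hp
  have hfp : f p = f w + 1 := hgf _
  have hpz : p < z := by
    by_contra h
    push_neg at h
    have := hdom p h
    omega
  have h1 : f w + 1 - f z ≤ K * (z - p) := by
    have h := hLip p z
    rw [hfp] at h
    have habs : |p - z| = z - p := by
      rw [abs_of_neg (show p - z < 0 by omega)]; ring
    rw [habs] at h
    linarith [le_abs_self (f w + 1 - f z)]
  have h2 : f w - f z ≤ K * (w - z) := by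
    have h := hLip w z
    have habs : |w - z| = w - z := abs_of_pos (by omega)
    rw [habs] at h
    linarith [le_abs_self (f w - f z)]
  have h3 : w - p ≤ L := by
    have h := hLipInv (f w + 1) (f w)
    rw [hfg w] at h
    have habs : |f w + 1 - f w| = 1 := by norm_num
    rw [habs, mul_one] at h
    linarith [neg_abs_le (p - w), neg_le_abs (p - w), le_abs_self (w - p), abs_sub_comm p w]
  have h4 : K * (w - p) ≤ K * L := mul_le_mul_of_nonneg_left h3 (by omega)
  nlinarith

/-- Structure lemma: the image of a half-line under a bi-Lipschitz bijection of ℤ is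
sandwiched between half-lines; the same orientation holds for all x simultaneously.
Inequalities with C/2 are written after multiplying by 2. -/
theorem biLipschitz_halfLine_image_dichotomy
    (f g : ℤ → ℤ) (hfg : Function.LeftInverse g f) (hgf : Function.RightInverse g f)
    (K L : ℤ)
    (hLip : ∀ x y : ℤ, |f x - f y| ≤ K * |x - y|)
    (hLipInv : ∀ u v : ℤ, |g u - g v| ≤ L * |u - v|) :
    (∀ x : ℤ,
      {n : ℤ | 2 * n ≤ 2 * f x - K * L} ⊆ f '' {z : ℤ | z ≤ x} ∧
      f '' {z : ℤ | z ≤ x} ⊆ {n : ℤ | 2 * n ≤ 2 * f x + K * L}) ∨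
    (∀ x : ℤ,
      {n : ℤ | 2 * f x + K * L ≤ 2 * n} ⊆ f '' {z : ℤ | z ≤ x} ∧
      f '' {z : ℤ | z ≤ x} ⊆ {n : ℤ | 2 * f x - K * L ≤ 2 * n}) := by
  have hK : 1 ≤ K := by
    have h := hLip (g 0) (g 1)
    rw [hgf 0, hgf 1] at h
    have h0 : |(0 : ℤ) - 1| = 1 := by norm_num
    rw [h0] at h
    by_contra hc
    push_neg at hc
    have : K * |g 0 - g 1| ≤ 0 :=
      mul_nonpos_of_nonpos_of_nonneg (by omega) (abs_nonneg _)
    omega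
  have hL : 1 ≤ L := by
    have h := hLipInv (f 0) (f 1)
    rw [hfg 0, hfg 1] at h
    have h0 : |(0 : ℤ) - 1| = 1 := by norm_num
    rw [h0] at h
    by_contra hc
    push_neg at hc
    have : L * |f 0 - f 1| ≤ 0 :=
      mul_nonpos_of_nonpos_of_nonneg (by omega) (abs_nonneg _)
    omega
  have hKL : 1 ≤ K * L := by nlinarith
  by_cases hA : ∃ C : ℤ, ∀ s : ℤ, s ≤ 0 → f s ≤ C
  · -- f bounded above on left half-lines: increasing orientation, case (a)
    left
    have hP : ∀ z w : ℤ, z < w → 2 * (f z - f w) ≤ K * L - 1 := by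
      intro z w hzw
      obtain ⟨C, hC⟩ := hA
      obtain ⟨C2, hC2⟩ := biLip_interval_bdd f 0 w
      have hbdd : ∀ s : ℤ, s ≤ w → f s ≤ max C C2 := by
        intro s hs
        rcases le_or_gt s 0 with h | h
        · exact le_trans (hC s h) (le_max_left _ _)
        · exact le_trans (hC2 s (by omega) hs) (le_max_right _ _)
      obtain ⟨v, ⟨z', hz'w, hfz'⟩, hvmax⟩ :=
        Int.exists_greatest_of_bdd
          (P := fun v => ∃ s : ℤ, s ≤ w ∧ f s = v)
          ⟨max C C2, by rintro v ⟨s, hs, rfl⟩; exact hbdd s hs⟩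
          ⟨f w, w, le_refl _, rfl⟩
      have hmax : ∀ s : ℤ, s ≤ w → f s ≤ f z' := by
        intro s hs
        rw [hfz']
        exact hvmax (f s) ⟨s, hs, rfl⟩
      rcases le_or_gt (f z') (f w) with h | h
      · have : f z ≤ f w := le_trans (hmax z (le_of_lt hzw)) h
        linarith
      · have hz'ltw : z' < w :=
          lt_of_le_of_ne hz'w (by intro e; rw [e] at h; exact lt_irrefl _ h)
        have hcore := biLip_core_left f g hfg hgf K L hLip hLipInv hK z' w hz'ltw hmax
        have hzle : f z ≤ f z' := hmax z (le_of_lt hzw)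
        linarith
    intro x
    constructor
    · rintro n hn
      simp only [Set.mem_setOf_eq] at hn
      refine ⟨g n, ?_, hgf n⟩
      simp only [Set.mem_setOf_eq]
      by_contra h
      push_neg at h
      have hq := hP x (g n) h
      rw [hgf n] at hq
      linarith
    · rintro n ⟨z, hz, rfl⟩
      simp only [Set.mem_setOf_eq] at hz ⊢
      rcases eq_or_lt_of_le hz with h | h
      · rw [h]; linarith
      · have := hP z x h; linarith
  · -- f unbounded above on the left: decreasing orientation, case (b)
    right
    push_neg at hA
    have hRB : ∀ x : ℤ, ∃ C : ℤ, ∀ s : ℤ, x ≤ s → f s ≤ C := by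
      intro x
      by_contra hx
      push_neg at hx
      have hx2 : ∀ y C : ℤ, ∃ s : ℤ, y ≤ s ∧ C < f s := by
        intro y C
        obtain ⟨C2, hC2⟩ := biLip_interval_bdd f x y
        obtain ⟨s, hs1, hs2⟩ := hx (max C C2)
        refine ⟨s, ?_, lt_of_le_of_lt (le_max_left _ _) hs2⟩
        by_contra hsy
        push_neg at hsy
        exact absurd (hC2 s hs1 (le_of_lt hsy))
          (not_le.mpr (lt_of_le_of_lt (le_max_right _ _) hs2))
      have getu : ∀ lo : ℤ, ∃ u : ℤ, lo < u ∧ 0 < g u ∧ g u ≤ L := by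
        intro lo
        obtain ⟨s0, hs0, hs0v⟩ := hA lo
        obtain ⟨s1, hs1, hs1v⟩ := hx2 (L + 1) (f s0)
        obtain ⟨v, ⟨hv1, hv2, hv3⟩, hvmax⟩ :=
          Int.exists_greatest_of_bdd
            (P := fun v => f s0 ≤ v ∧ v ≤ f s1 ∧ g v ≤ 0)
            ⟨f s1, fun v hv => hv.2.1⟩
            ⟨f s0, le_refl _, le_of_lt hs1v, by rw [hfg s0]; exact hs0⟩
        refine ⟨v + 1, by omega, ?_, ?_⟩
        · by_contra h
          push_neg at h
          have hvv : v + 1 ≤ f s1 := by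
            rcases eq_or_lt_of_le hv2 with e | e
            · exfalso
              rw [e, hfg s1] at hv3
              omega
            · omega
          have := hvmax (v + 1) ⟨by omega, hvv, h⟩
          omega
        · have h := hLipInv (v + 1) v
          have habs : |(v : ℤ) + 1 - v| = 1 := by norm_num
          rw [habs, mul_one] at h
          have := (abs_le.mp h).2
          omega
      obtain ⟨u1, hu1gt, hu1a, hu1b⟩ := getu 0
      obtain ⟨u2, hu2gt, hu2a, hu2b⟩ := getu (u1 + K * L)
      have h := hLip (g u2) (g u1)
      rw [hgf u2, hgf u1] at h
      have h1 : |u2 - u1| = u2 - u1 := abs_of_pos (by linarith)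
      have h2 : |g u2 - g u1| ≤ L - 1 := by
        rw [abs_le]
        constructor <;> omega
      rw [h1] at h
      have h3 : K * |g u2 - g u1| ≤ K * (L - 1) :=
        mul_le_mul_of_nonneg_left h2 (by omega)
      nlinarith
    have hQ : ∀ z w : ℤ, z < w → 2 * (f w - f z) ≤ K * L - 1 := by
      intro z w hzw
      obtain ⟨C, hC⟩ := hRB z
      obtain ⟨v, ⟨w', hw', hfw'⟩, hvmax⟩ :=
        Int.exists_greatest_of_bdd
          (P := fun v => ∃ s : ℤ, z ≤ s ∧ f s = v)
          ⟨C, by rintro v ⟨s, hs, rfl⟩; exact hC s hs⟩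
          ⟨f z, z, le_refl _, rfl⟩
      have hmax : ∀ s : ℤ, z ≤ s → f s ≤ f w' := by
        intro s hs
        rw [hfw']
        exact hvmax (f s) ⟨s, hs, rfl⟩
      rcases le_or_gt (f w') (f z) with h | h
      · have : f w ≤ f z := le_trans (hmax w (le_of_lt hzw)) h
        linarith
      · have hzltw' : z < w' :=
          lt_of_le_of_ne hw' (by intro e; rw [← e] at h; exact lt_irrefl _ h)
        have hcore := biLip_core_right f g hfg hgf K L hLip hLipInv hK z w' hzltw' hmax
        have hwle : f w ≤ f w' := hmax w (le_of_lt hzw)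
        linarith
    intro x
    constructor
    · rintro n hn
      simp only [Set.mem_setOf_eq] at hn
      refine ⟨g n, ?_, hgf n⟩
      simp only [Set.mem_setOf_eq]
      by_contra h
      push_neg at h
      have hq := hQ x (g n) h
      rw [hgf n] at hq
      linarith
    · rintro n ⟨z, hz, rfl⟩
      simp only [Set.mem_setOf_eq] at hz ⊢
      rcases eq_or_lt_of_le hz with h | h
      · rw [h]; linarith
      · have := hQ z x h; linarith
end

section
/- Let f : ℤ → ℤ be a bi-Lipschitz bijection with C = Lip(f)·Lip(f⁻¹), and suppose f((-∞, x]) ⊆ (-∞, f(x) + C/2] and (-∞, f(x) - C/2] ⊆ f((-∞, x]) for all x ∈ ℤ. Then for all x₁ < x₂ with x₂ - x₁ > C, one has f(x₂) - f(x₁) - C ≤ x₂ - x₁ ≤ f(x₂) - f(x₁) + C. -/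
/-!
The values `n` with `f x₁ + C/2 < n ≤ f x₂ - C/2` are all attained on `(x₁, x₂]`, while `f` maps
`(x₁, x₂]` injectively into `(f x₁ - C/2, f x₂ + C/2]`. Counting both inclusions compares
`x₂ - x₁` with `f x₂ - f x₁ ∓ C`.
-/

open Set

section

variable {f : ℤ → ℤ} {C x₁ x₂ : ℤ}

lemma Ioc_half_subset_image_Ioc
    (hUpper : f '' Iic x₁ ⊆ {n : ℤ | 2 * n ≤ 2 * f x₁ + C})
    (hLower : {n : ℤ | 2 * n ≤ 2 * f x₂ - C} ⊆ f '' Iic x₂) :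
    Finset.Ioc ((2 * f x₁ + C) / 2) ((2 * f x₂ - C) / 2) ⊆ (Finset.Ioc x₁ x₂).image f := by
  intro n hn
  rw [Finset.mem_Ioc] at hn
  obtain ⟨z, hzx₂, rfl⟩ := hLower (show 2 * n ≤ 2 * f x₂ - C by omega)
  have hx₁z : x₁ < z := by
    by_contra! hzx₁
    have : 2 * f z ≤ 2 * f x₁ + C := hUpper ⟨z, hzx₁, rfl⟩
    omega
  exact Finset.mem_image_of_mem f (Finset.mem_Ioc.2 ⟨hx₁z, hzx₂⟩)

lemma image_Ioc_subset_Ioc_half (hf : Function.Injective f)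
    (hUpper : f '' Iic x₂ ⊆ {n : ℤ | 2 * n ≤ 2 * f x₂ + C})
    (hLower : {n : ℤ | 2 * n ≤ 2 * f x₁ - C} ⊆ f '' Iic x₁) :
    (Finset.Ioc x₁ x₂).image f ⊆ Finset.Ioc ((2 * f x₁ - C) / 2) ((2 * f x₂ + C) / 2) := by
  intro n hn
  obtain ⟨z, hz, rfl⟩ := Finset.mem_image.1 hn
  rw [Finset.mem_Ioc] at hz ⊢
  have hzx₂ : 2 * f z ≤ 2 * f x₂ + C := hUpper ⟨z, hz.2, rfl⟩
  have hzx₁ : 2 * f x₁ - C < 2 * f z := by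
    by_contra! hle
    obtain ⟨w, hwx₁, hwz⟩ := hLower hle
    have : w = z := hf hwz
    have : w ≤ x₁ := hwx₁
    omega
  omega

end

theorem biLipschitz_approx_translation_general
    (f g : ℤ → ℤ) (hfg : Function.LeftInverse g f)
    (C : ℤ)
    (hUpper : ∀ x : ℤ, f '' {z : ℤ | z ≤ x} ⊆ {n : ℤ | 2 * n ≤ 2 * f x + C})
    (hLower : ∀ x : ℤ, {n : ℤ | 2 * n ≤ 2 * f x - C} ⊆ f '' {z : ℤ | z ≤ x}) :
    ∀ x₁ x₂ : ℤ, x₁ < x₂ → C < x₂ - x₁ →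
      f x₂ - f x₁ - C ≤ x₂ - x₁ ∧ x₂ - x₁ ≤ f x₂ - f x₁ + C := by
  intro x₁ x₂ hx _
  have hf : Function.Injective f := hfg.injective
  have hlow := (Finset.card_le_card (Ioc_half_subset_image_Ioc (hUpper x₁) (hLower x₂))).trans
    Finset.card_image_le
  have hupp := Finset.card_le_card (image_Ioc_subset_Ioc_half hf (hUpper x₂) (hLower x₁))
  rw [Finset.card_image_of_injective _ hf] at hupp
  simp only [Int.card_Ioc] at hlow hupp
  omega

/-- In the orientation-preserving case of the structure lemma,
f is an approximate translation on pairs at distance more than C. -/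
theorem biLipschitz_approx_translation
    (f g : ℤ → ℤ) (hfg : Function.LeftInverse g f) (hgf : Function.RightInverse g f)
    (K L : ℤ)
    (hLip : ∀ x y : ℤ, |f x - f y| ≤ K * |x - y|)
    (hLipInv : ∀ u v : ℤ, |g u - g v| ≤ L * |u - v|)
    (C : ℤ) (hC : C = K * L)
    (hUpper : ∀ x : ℤ, f '' {z : ℤ | z ≤ x} ⊆ {n : ℤ | 2 * n ≤ 2 * f x + C})
    (hLower : ∀ x : ℤ, {n : ℤ | 2 * n ≤ 2 * f x - C} ⊆ f '' {z : ℤ | z ≤ x}) :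
    ∀ x₁ x₂ : ℤ, x₁ < x₂ → C < x₂ - x₁ →
      f x₂ - f x₁ - C ≤ x₂ - x₁ ∧ x₂ - x₁ ≤ f x₂ - f x₁ + C :=
  biLipschitz_approx_translation_general f g hfg C hUpper hLower
end

section
/- Let f : ℤ → ℤ be a bi-Lipschitz bijection with C = Lip(f)·Lip(f⁻¹). Then the set of y ∈ ℤ at which the characteristic function of f((-∞,x]) changes value (i.e., exactly one of y, y+1 lies in f((-∞,x])) is contained in the interval [f(x) - C/2 - 1, f(x) + C/2]. -/
/-- Every change point of the characteristic function of f((-∞,x]) lies in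
[f(x) - C/2 - 1, f(x) + C/2] (written after clearing denominators). -/
theorem biLipschitz_change_points_in_interval
    (f g : ℤ → ℤ) (hfg : Function.LeftInverse g f) (hgf : Function.RightInverse g f)
    (K L : ℤ)
    (hLip : ∀ x y : ℤ, |f x - f y| ≤ K * |x - y|)
    (hLipInv : ∀ u v : ℤ, |g u - g v| ≤ L * |u - v|) :
    ∀ x y : ℤ,
      ((y ∈ f '' {z : ℤ | z ≤ x} ∧ y + 1 ∉ f '' {z : ℤ | z ≤ x}) ∨
       (y ∉ f '' {z : ℤ | z ≤ x} ∧ y + 1 ∈ f '' {z : ℤ | z ≤ x})) →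
      2 * f x - K * L - 2 ≤ 2 * y ∧ 2 * y ≤ 2 * f x + K * L := by
  have hK : 0 ≤ K := by
    have h := hLip 1 0
    have h10 : f 1 ≠ f 0 := fun h' => by simpa using hfg.injective h'
    have : (1 : ℤ) ≤ |f 1 - f 0| := Int.one_le_abs (sub_ne_zero.mpr h10)
    simpa using le_trans (by linarith) h
  intro x y h
  have key : ∀ u : ℤ, (u ∈ f '' {z : ℤ | z ≤ x}) ↔ g u ≤ x := by
    intro u
    constructor
    · rintro ⟨z, hz, rfl⟩
      rwa [hfg z]
    · intro hu
      exact ⟨g u, hu, hgf u⟩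
  rw [key, key] at h
  have e1 : |y - f x| ≤ K * |g y - x| := by
    have h' := hLip (g y) x
    rwa [hgf y] at h'
  have e2 : |y + 1 - f x| ≤ K * |g (y + 1) - x| := by
    have h' := hLip (g (y + 1)) x
    rwa [hgf (y + 1)] at h'
  have e3 : |g (y + 1) - g y| ≤ L := by
    have h' := hLipInv (y + 1) y
    simpa using h'
  have habs : |2 * y + 1 - 2 * f x| ≤ |y - f x| + |y + 1 - f x| := by
    calc |2 * y + 1 - 2 * f x| = |(y - f x) + (y + 1 - f x)| := by ring_nf
    _ ≤ |y - f x| + |y + 1 - f x| := abs_add_le _ _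
  have hsum : |g y - x| + |g (y + 1) - x| = |g (y + 1) - g y| := by
    rcases h with ⟨ha, hb⟩ | ⟨ha, hb⟩
    · push_neg at hb
      rw [abs_of_nonpos (by omega), abs_of_nonneg (by omega),
        abs_of_nonneg (by omega)]
      ring
    · push_neg at ha
      rw [abs_of_nonneg (by omega), abs_of_nonpos (by omega),
        abs_of_nonpos (by omega)]
      ring
  have hmain : |2 * y + 1 - 2 * f x| ≤ K * L := by
    have h1 : K * |g y - x| + K * |g (y + 1) - x| = K * |g (y + 1) - g y| := by
      rw [← hsum]; ring
    have h2 : K * |g (y + 1) - g y| ≤ K * L := mul_le_mul_of_nonneg_left e3 hK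
    linarith
  rcases abs_le.mp hmain with ⟨hl, hr⟩
  constructor <;> linarith
end

section
/- For every K > 1 there exists a bi-Lipschitz bijection F : ℤ² → ℤ² that is not within bounded ℓ∞ distance of any isometry of ℤ². Concretely, F(x,y) = (x, y + |x|) is bi-Lipschitz but sup over ℤ² of the distance from F to any map of the form (an affine isometry of ℤ²) is infinite. -/
/-! The shear `(x, y) ↦ (x, y + |x|)` moves the second coordinate by `|x|`, which is
`1`-Lipschitz in `x`, so it is `2`-bi-Lipschitz. It brings `(n, 0)` and `(0, n)`, at
distance `2n`, to `(n, n)` and `(0, n)`, at distance `n`. A map within `M` of an isometry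
distorts distances by at most `2M`, so no isometry stays within bounded distance of the
shear once `n > 2M`. -/

def l1dist (p q : ℤ × ℤ) : ℤ := |p.1 - q.1| + |p.2 - q.2|

lemma l1dist_comm (p q : ℤ × ℤ) : l1dist p q = l1dist q p := by
  simp only [l1dist, abs_sub_comm]

lemma l1dist_triangle (p q r : ℤ × ℤ) : l1dist p r ≤ l1dist p q + l1dist q r := by
  unfold l1dist
  linarith [abs_sub_le p.1 q.1 r.1, abs_sub_le p.2 q.2 r.2]

lemma l1dist_le_add_of_isometry_near {F G : ℤ × ℤ → ℤ × ℤ} {M : ℤ}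
    (hG : ∀ p q, l1dist (G p) (G q) = l1dist p q) (hFG : ∀ p, l1dist (F p) (G p) ≤ M)
    (p q : ℤ × ℤ) : l1dist p q ≤ l1dist (F p) (F q) + 2 * M := by
  rw [← hG]
  calc l1dist (G p) (G q)
      ≤ l1dist (G p) (F p) + l1dist (F p) (F q) + l1dist (F q) (G q) := by
        linarith [l1dist_triangle (G p) (F p) (G q), l1dist_triangle (F p) (F q) (G q)]
    _ ≤ l1dist (F p) (F q) + 2 * M := by
        linarith [l1dist_comm (G p) (F p), hFG p, hFG q]

def shear (p : ℤ × ℤ) : ℤ × ℤ := (p.1, p.2 + |p.1|)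

lemma shear_bijective : Function.Bijective shear :=
  Function.bijective_iff_has_inverse.mpr
    ⟨fun q => (q.1, q.2 - |q.1|), fun p => by simp [shear], fun q => by simp [shear]⟩

lemma abs_shear_snd_sub_sub_le (p q : ℤ × ℤ) :
    |((shear p).2 - (shear q).2) - (p.2 - q.2)| ≤ |p.1 - q.1| := by
  have h : (shear p).2 - (shear q).2 - (p.2 - q.2) = |p.1| - |q.1| := by
    simp only [shear]; ring
  rw [h]
  exact abs_abs_sub_abs_le_abs_sub p.1 q.1

lemma l1dist_shear_le (p q : ℤ × ℤ) : l1dist (shear p) (shear q) ≤ 2 * l1dist p q := by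
  have h := abs_shear_snd_sub_sub_le p q
  have h' := abs_sub_abs_le_abs_sub ((shear p).2 - (shear q).2) (p.2 - q.2)
  unfold l1dist
  simp only [shear] at h h' ⊢
  linarith [abs_nonneg (p.2 - q.2)]

lemma l1dist_le_two_mul_l1dist_shear (p q : ℤ × ℤ) :
    l1dist p q ≤ 2 * l1dist (shear p) (shear q) := by
  have h := abs_shear_snd_sub_sub_le p q
  have h' := abs_sub_abs_le_abs_sub (p.2 - q.2) ((shear p).2 - (shear q).2)
  rw [abs_sub_comm (p.2 - q.2)] at h'
  unfold l1dist
  simp only [shear] at h h' ⊢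
  linarith [abs_nonneg (p.2 + |p.1| - (q.2 + |q.1|))]

lemma l1dist_axis_points {n : ℤ} (hn : 0 ≤ n) : l1dist (n, 0) (0, n) = 2 * n := by
  simp [l1dist, abs_of_nonneg hn, two_mul]

lemma l1dist_shear_axis_points {n : ℤ} (hn : 0 ≤ n) :
    l1dist (shear (n, 0)) (shear (0, n)) = n := by
  simp [l1dist, shear, abs_of_nonneg hn]

/-- F(x,y) = (x, y + |x|) is a bi-Lipschitz bijection of ℤ² (ℓ¹ metric) which is not
within bounded ℓ∞ distance of any isometry of ℤ². -/
theorem exists_biLipschitz_far_from_isometries :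
    ∃ F : ℤ × ℤ → ℤ × ℤ,
      F = (fun p : ℤ × ℤ => (p.1, p.2 + |p.1|)) ∧
      Function.Bijective F ∧
      (∃ K : ℤ, 0 < K ∧
        (∀ p q : ℤ × ℤ,
          |(F p).1 - (F q).1| + |(F p).2 - (F q).2| ≤ K * (|p.1 - q.1| + |p.2 - q.2|)) ∧
        (∀ p q : ℤ × ℤ,
          |p.1 - q.1| + |p.2 - q.2| ≤ K * (|(F p).1 - (F q).1| + |(F p).2 - (F q).2|))) ∧
      (∀ G : ℤ × ℤ → ℤ × ℤ, Function.Bijective G →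
        (∀ p q : ℤ × ℤ,
          |(G p).1 - (G q).1| + |(G p).2 - (G q).2| = |p.1 - q.1| + |p.2 - q.2|) →
        ¬ ∃ M : ℤ, ∀ p : ℤ × ℤ,
          |(F p).1 - (G p).1| + |(F p).2 - (G p).2| ≤ M) := by
  refine ⟨shear, rfl, shear_bijective,
    ⟨2, two_pos, l1dist_shear_le, l1dist_le_two_mul_l1dist_shear⟩, ?_⟩
  rintro G - hG ⟨M, hM⟩
  have hM0 : 0 ≤ M := le_trans (by positivity) (hM 0)
  have hn : 0 ≤ 2 * M + 1 := by omega
  have h := l1dist_le_add_of_isometry_near hG hM (2 * M + 1, 0) (0, 2 * M + 1)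
  rw [l1dist_axis_points hn, l1dist_shear_axis_points hn] at h
  omega
end

section
/- The wobbling group W(ℤ) (bijections of ℤ at bounded distance from the identity) is a subgroup of index 2 in the group BL(ℤ) of all bi-Lipschitz bijections of ℤ, with the reflection x ↦ -x representing the nontrivial coset. -/
/-! Since `f⁻¹` is Lipschitz, `|f x| → ∞` as `x → -∞`; since the steps of `f` are bounded
by its Lipschitz constant `K`, once `|f x| > K` the sign of `f x` can no longer change. Hence
`f` tends to `+∞` or to `-∞` at `-∞`, and composing with `x ↦ -x` we may assume the latter.
A discrete intermediate value argument then makes `f` coarsely monotone, and then so is `f⁻¹`.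
Counting the `b - a + 1` points of `f '' [a, b] ⊆ [f a - C, f b + C]`, for `f` and for `f⁻¹`,
bounds the oscillation of `x ↦ f x - x`. -/

open Filter Function

def IntLipschitzWith (K : ℤ) (f : ℤ → ℤ) : Prop :=
  ∀ x y, |f x - f y| ≤ K * |x - y|

def CoarselyMonotone (C : ℤ) (f : ℤ → ℤ) : Prop :=
  ∀ ⦃m n⦄, m ≤ n → f m ≤ f n + C

namespace IntLipschitzWith

variable {K L : ℤ} {f g : ℤ → ℤ}

lemma nonneg (hf : IntLipschitzWith K f) : 0 ≤ K := by
  simpa using (abs_nonneg _).trans (hf 1 0)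

lemma comp (hf : IntLipschitzWith K f) (hg : IntLipschitzWith L g) :
    IntLipschitzWith (K * L) (f ∘ g) := fun x y =>
  calc |f (g x) - f (g y)| ≤ K * |g x - g y| := hf _ _
    _ ≤ K * (L * |x - y|) := mul_le_mul_of_nonneg_left (hg x y) hf.nonneg
    _ = K * L * |x - y| := (mul_assoc _ _ _).symm

lemma of_abs_sub_le {M : ℤ} (hM : ∀ x, |f x - x| ≤ M) : IntLipschitzWith (2 * M + 1) f := by
  intro x y
  rcases eq_or_ne x y with rfl | hxy
  · simp
  have hdist : 1 ≤ |x - y| := Int.one_le_abs (sub_ne_zero.mpr hxy)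
  have hM0 : 0 ≤ M := (abs_nonneg _).trans (hM x)
  have htri₁ := abs_sub_le (f x) x (f y)
  have htri₂ := abs_sub_le x y (f y)
  rw [abs_sub_comm y] at htri₂
  nlinarith [hM x, hM y, mul_le_mul_of_nonneg_left hdist hM0]

lemma exists_le_abs_sub_le (hf : IntLipschitzWith K f) {i j v : ℤ} (hij : i ≤ j)
    (hi : f i ≤ v) (hj : v ≤ f j) : ∃ k ≤ j, |f k - v| ≤ K := by
  induction j, hij using Int.leInduction with
  | base => exact ⟨i, le_rfl, by simpa [le_antisymm hi hj] using hf.nonneg⟩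
  | succ j hij ih =>
    by_cases hv : v ≤ f j
    · obtain ⟨k, hkj, hk⟩ := ih hv
      exact ⟨k, by omega, hk⟩
    · have hstep := hf (j + 1) j
      simp only [add_sub_cancel_left, abs_one, mul_one, abs_le] at hstep
      exact ⟨j + 1, le_rfl, abs_le.mpr ⟨by omega, by omega⟩⟩

lemma pos_iff_pos_of_lt_abs (hf : IntLipschitzWith K f) {N : ℤ} (hbig : ∀ n ≤ N, K < |f n|) :
    ∀ n ≤ N, (0 < f n ↔ 0 < f N) := by
  intro n hn
  induction n, hn using Int.leInductionDown with
  | base => rfl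
  | pred n hn ih =>
    rw [← ih]
    have hstep := hf (n - 1) n
    have h₁ := hbig (n - 1) (by omega)
    have h₂ := hbig n hn
    simp only [sub_sub_cancel_left, abs_neg, abs_one, mul_one, abs_le] at hstep
    rw [lt_abs] at h₁ h₂
    omega

lemma tendsto_atBot_or (hf : IntLipschitzWith K f)
    (hprop : Tendsto (fun x => |f x|) atBot atTop) :
    Tendsto f atBot atTop ∨ Tendsto f atBot atBot := by
  obtain ⟨N, hN⟩ := tendsto_atBot_atTop.mp hprop (K + 1)
  have hbig : ∀ n ≤ N, K < |f n| := fun n hn => hN n hn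
  have hsign := hf.pos_iff_pos_of_lt_abs hbig
  by_cases hpos : 0 < f N
  · refine .inl (hprop.congr' ?_)
    filter_upwards [eventually_le_atBot N] with n hn
    exact abs_of_pos ((hsign n hn).mpr hpos)
  · refine .inr ((tendsto_neg_atTop_atBot.comp hprop).congr' ?_)
    filter_upwards [eventually_le_atBot N] with n hn
    have hneg : f n < 0 := by
      have hn₁ := (hsign n hn).not.mpr hpos
      have hn₂ := hbig n hn
      have hK := hf.nonneg
      rw [lt_abs] at hn₂
      omega
    simp [abs_of_neg hneg]

end IntLipschitzWith

namespace CoarselyMonotone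

variable {C C' : ℤ} {f : ℤ → ℤ}

lemma nonneg (hf : CoarselyMonotone C f) : 0 ≤ C := by
  simpa using hf (le_refl 0)

lemma sub_le_sub_add (hf : CoarselyMonotone C f) (hinj : Injective f) {a b : ℤ} (hab : a ≤ b) :
    b - a ≤ f b - f a + 2 * C := by
  have hcard := Finset.card_le_card_of_injOn f
    (s := Finset.Icc a b) (t := Finset.Icc (f a - C) (f b + C))
    (fun n hn => by
      rw [Finset.mem_coe, Finset.mem_Icc] at hn ⊢
      exact ⟨by linarith [hf hn.1], hf hn.2⟩)
    hinj.injOn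
  rw [Int.card_Icc, Int.card_Icc] at hcard
  omega

lemma symm {f : Equiv.Perm ℤ} {L : ℤ} (hf : CoarselyMonotone C f)
    (hL : IntLipschitzWith L f.symm) : CoarselyMonotone (L * C) f.symm := by
  intro u v huv
  by_contra! hlt
  have hvu : v ≤ u + C := by
    simpa using hf (m := f.symm v) (n := f.symm u)
      (by linarith [mul_nonneg hL.nonneg hf.nonneg])
  have hdist : |u - v| ≤ C := abs_le.mpr ⟨by linarith, by linarith⟩
  have := (hL u v).trans (mul_le_mul_of_nonneg_left hdist hL.nonneg)
  rw [abs_le] at this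
  linarith

lemma exists_abs_sub_le {f : Equiv.Perm ℤ} (hf : CoarselyMonotone C f)
    (hfs : CoarselyMonotone C' f.symm) : ∃ M, ∀ x, |f x - x| ≤ M := by
  have hosc : ∀ a b, a ≤ b →
      (f a - a) - (f b - b) ≤ 2 * C ∧ (f b - b) - (f a - a) ≤ 2 * C' := by
    intro a b hab
    refine ⟨by linarith [hf.sub_le_sub_add f.injective hab], ?_⟩
    rcases le_or_gt (f a) (f b) with h | h
    · have := hfs.sub_le_sub_add f.symm.injective h
      simp only [Equiv.symm_apply_apply] at this
      linarith
    · linarith [hfs.nonneg]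
  refine ⟨|f 0| + 2 * C + 2 * C', fun x => ?_⟩
  have h0 := abs_le.mp (le_refl |f 0|)
  rw [abs_le]
  rcases le_total 0 x with hx | hx
  · have := hosc 0 x hx
    constructor <;> linarith [hf.nonneg, hfs.nonneg]
  · have := hosc x 0 hx
    constructor <;> linarith [hf.nonneg, hfs.nonneg]

end CoarselyMonotone

section

variable {K L : ℤ}

lemma tendsto_abs_atBot_atTop {f : Equiv.Perm ℤ} (hL : IntLipschitzWith L f.symm) :
    Tendsto (fun x => |f x|) atBot atTop := by
  refine tendsto_atBot_atTop.mpr fun R => ⟨f.symm 0 - L * |R| - 1, fun x hx => ?_⟩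
  by_contra! hlt
  have hdist := hL (f x) 0
  rw [Equiv.symm_apply_apply, sub_zero, abs_le] at hdist
  have := mul_le_mul_of_nonneg_left (hlt.le.trans (le_abs_self R)) hL.nonneg
  linarith [hdist.1]

lemma coarselyMonotone_of_tendsto_atBot {f : Equiv.Perm ℤ} (hK : IntLipschitzWith K f)
    (hL : IntLipschitzWith L f.symm) (h : Tendsto f atBot atBot) :
    CoarselyMonotone (K * (L * K)) f := by
  intro m n hmn
  have hC : 0 ≤ K * (L * K) := mul_nonneg hK.nonneg (mul_nonneg hL.nonneg hK.nonneg)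
  rcases le_or_gt (f m) (f n) with hle | hlt
  · linarith
  -- `f n` lies between `f p` and `f m` with `p ≤ m`, so `n` is within `L * K` of `(-∞, m]`.
  obtain ⟨p, hp, hpm⟩ := ((h.eventually (eventually_le_atBot (f n))).and
    (eventually_le_atBot m)).exists
  obtain ⟨k, hkm, hk⟩ := hK.exists_le_abs_sub_le hpm hp hlt.le
  have hnk : |n - k| ≤ L * K := by
    rw [abs_sub_comm] at hk
    simpa using (hL (f n) (f k)).trans (mul_le_mul_of_nonneg_left hk hL.nonneg)
  have hmn' : |m - n| ≤ L * K := by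
    rw [abs_sub_comm, abs_of_nonneg (by linarith)]
    linarith [(abs_le.mp hnk).2]
  have := (hK m n).trans (mul_le_mul_of_nonneg_left hmn' hK.nonneg)
  linarith [le_abs_self (f m - f n)]

end

def biLipschitzGroup : Subgroup (Equiv.Perm ℤ) where
  carrier := {f | ∃ K L : ℤ, IntLipschitzWith K f ∧ IntLipschitzWith L f.symm}
  one_mem' := ⟨1, 1, fun x y => (one_mul _).ge, fun x y => (one_mul _).ge⟩
  mul_mem' := by
    rintro a b ⟨Ka, La, ha, ha'⟩ ⟨Kb, Lb, hb, hb'⟩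
    exact ⟨Ka * Kb, Lb * La, ha.comp hb, hb'.comp ha'⟩
  inv_mem' := by
    rintro a ⟨Ka, La, ha, ha'⟩
    exact ⟨La, Ka, ha', ha⟩

def wobblingGroup : Subgroup (Equiv.Perm ℤ) where
  carrier := {f | ∃ M : ℤ, ∀ x, |f x - x| ≤ M}
  one_mem' := ⟨0, fun x => by simp⟩
  mul_mem' := by
    rintro a b ⟨Ma, ha⟩ ⟨Mb, hb⟩
    refine ⟨Ma + Mb, fun x => ?_⟩
    calc |a (b x) - x| ≤ |a (b x) - b x| + |b x - x| := abs_sub_le _ _ _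
      _ ≤ Ma + Mb := add_le_add (ha _) (hb _)
  inv_mem' := by
    rintro a ⟨M, ha⟩
    refine ⟨M, fun x => ?_⟩
    simpa [abs_sub_comm] using ha (a.symm x)

lemma wobblingGroup_le_biLipschitzGroup : wobblingGroup ≤ biLipschitzGroup := by
  intro f hf
  obtain ⟨M', hM'⟩ := wobblingGroup.inv_mem hf
  obtain ⟨M, hM⟩ := hf
  exact ⟨_, _, .of_abs_sub_le hM, .of_abs_sub_le hM'⟩

lemma neg_mem_biLipschitzGroup : Equiv.neg ℤ ∈ biLipschitzGroup :=
  ⟨1, 1, fun x y => by simp [neg_add_eq_sub, abs_sub_comm],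
    fun x y => by simp [neg_add_eq_sub, abs_sub_comm]⟩

lemma neg_mul_notMem_wobblingGroup {f : Equiv.Perm ℤ} (hf : f ∈ wobblingGroup) :
    Equiv.neg ℤ * f ∉ wobblingGroup := by
  obtain ⟨M, hM⟩ := hf
  rintro ⟨M', hM'⟩
  have h₁ := abs_le.mp (hM (M + M' + 1))
  have h₂ := abs_le.mp (hM' (M + M' + 1))
  have h₃ := abs_nonneg (f 0 - 0) |>.trans (hM 0)
  have h₄ := abs_nonneg (-f 0 - 0) |>.trans (hM' 0)
  simp only [Equiv.Perm.mul_apply, Equiv.neg_apply] at h₂ h₄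
  linarith [h₁.2, h₂.2]

lemma neg_notMem_wobblingGroup : Equiv.neg ℤ ∉ wobblingGroup := by
  simpa using neg_mul_notMem_wobblingGroup wobblingGroup.one_mem

lemma mem_wobblingGroup_of_tendsto_atBot {f : Equiv.Perm ℤ} (hf : f ∈ biLipschitzGroup)
    (h : Tendsto f atBot atBot) : f ∈ wobblingGroup := by
  obtain ⟨K, L, hK, hL⟩ := hf
  have hmono := coarselyMonotone_of_tendsto_atBot hK hL h
  exact hmono.exists_abs_sub_le (hmono.symm hL)

lemma mem_wobblingGroup_or_neg_mul_mem {f : Equiv.Perm ℤ} (hf : f ∈ biLipschitzGroup) :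
    f ∈ wobblingGroup ∨ Equiv.neg ℤ * f ∈ wobblingGroup := by
  obtain ⟨K, L, hK, hL⟩ := id hf
  rcases hK.tendsto_atBot_or (tendsto_abs_atBot_atTop hL) with h | h
  · exact .inr (mem_wobblingGroup_of_tendsto_atBot
      (biLipschitzGroup.mul_mem neg_mem_biLipschitzGroup hf) (tendsto_neg_atTop_atBot.comp h))
  · exact .inl (mem_wobblingGroup_of_tendsto_atBot hf h)

lemma index_wobblingGroup_subgroupOf : (wobblingGroup.subgroupOf biLipschitzGroup).index = 2 := by
  refine Subgroup.index_eq_two_iff'.mpr ⟨⟨_, neg_mem_biLipschitzGroup⟩, fun f => ?_⟩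
  simp only [Subgroup.mem_subgroupOf, Subgroup.coe_mul]
  rcases mem_wobblingGroup_or_neg_mul_mem f.2 with h | h
  · exact .inr ⟨h, neg_mul_notMem_wobblingGroup h⟩
  · exact .inl ⟨h, fun h' => neg_mul_notMem_wobblingGroup h' h⟩

/-- The wobbling group W(ℤ) is an index-2 subgroup of the group BL(ℤ) of bi-Lipschitz
bijections of ℤ, the reflection x ↦ -x representing the nontrivial coset. -/
theorem wobbling_index_two :
    ∃ (BL W : Subgroup (Equiv.Perm ℤ)),
      (∀ f : Equiv.Perm ℤ, f ∈ BL ↔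
        ∃ K L : ℤ, (∀ x y : ℤ, |f x - f y| ≤ K * |x - y|) ∧
          (∀ u v : ℤ, |f.symm u - f.symm v| ≤ L * |u - v|)) ∧
      (∀ f : Equiv.Perm ℤ, f ∈ W ↔ ∃ M : ℤ, ∀ x : ℤ, |f x - x| ≤ M) ∧
      W ≤ BL ∧
      (W.subgroupOf BL).index = 2 ∧
      (Equiv.neg ℤ ∈ BL ∧ Equiv.neg ℤ ∉ W) ∧
      (∀ f ∈ BL, f ∈ W ∨ Equiv.neg ℤ * f ∈ W) :=
  ⟨biLipschitzGroup, wobblingGroup, fun _ => Iff.rfl, fun _ => Iff.rfl,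
    wobblingGroup_le_biLipschitzGroup, index_wobblingGroup_subgroupOf,
    ⟨neg_mem_biLipschitzGroup, neg_notMem_wobblingGroup⟩,
    fun _ => mem_wobblingGroup_or_neg_mul_mem⟩
end

section
/- The map σ : BL(ℤ) → {±1} assigning to each bi-Lipschitz bijection f of ℤ its 'orientation' (σ(f) = 1 if sup|f(x) - x| < ∞, σ(f) = -1 if sup|f(x) + x| < ∞) is a well-defined group homomorphism. -/
/-- A permutation of ℤ is bi-Lipschitz if both it and its inverse are Lipschitz. -/
def IsBiLipschitzPerm (f : Equiv.Perm ℤ) : Prop :=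
  ∃ K L : ℤ, (∀ x y : ℤ, |f x - f y| ≤ K * |x - y|) ∧
    (∀ u v : ℤ, |f.symm u - f.symm v| ≤ L * |u - v|)

/-!
A permutation `f` of `ℤ` with `f` `K`-Lipschitz and `f⁻¹` `L`-Lipschitz is a rough isometry:
by a discrete intermediate value argument, `f⁻¹` maps every integer between `f y` and `f x`
to within `LK` of some `z` between `y` and `x`, so counting gives
`|f x - f y| ≤ |x - y| + 2LK`, and the same bound for `f⁻¹` gives the reverse inequality.
For a rough isometry every `f x - f 0` is close to `x` or to `-x`, and the two cases cannot
occur at two points far from `0`; hence `f` stays at bounded distance from `x ↦ x` or from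
`x ↦ -x`. The slope of a map at bounded distance from a linear one is unique and multiplies
under composition, which makes the orientation a homomorphism.
-/

theorem exists_abs_sub_le_of_mem_uIcc {h : ℤ → ℤ} {K : ℤ}
    (hstep : ∀ z, |h (z + 1) - h z| ≤ K) {y x m : ℤ} (hyx : y ≤ x)
    (hm : m ∈ Set.uIcc (h y) (h x)) : ∃ z ∈ Set.Icc y x, |h z - m| ≤ K := by
  induction x, hyx using Int.leInduction with
  | base =>
    rw [Set.uIcc_self, Set.mem_singleton_iff] at hm
    exact ⟨y, Set.left_mem_Icc.2 le_rfl, by simpa [hm] using (abs_nonneg _).trans (hstep y)⟩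
  | succ x hyx ih =>
    rcases Set.uIcc_subset_uIcc_union_uIcc hm with hm | hm
    · obtain ⟨z, hz, hzm⟩ := ih hm
      exact ⟨z, ⟨hz.1, hz.2.trans (by omega)⟩, hzm⟩
    · refine ⟨x, ⟨hyx, by omega⟩, ?_⟩
      rw [abs_sub_comm]
      exact (Set.abs_sub_left_of_mem_uIcc hm).trans (hstep x)

theorem abs_apply_sub_apply_le {f : Equiv.Perm ℤ} {K L : ℤ}
    (hf : ∀ x y, |f x - f y| ≤ K * |x - y|) (hg : ∀ u v, |f.symm u - f.symm v| ≤ L * |u - v|)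
    (x y : ℤ) : |f x - f y| ≤ |x - y| + 2 * (L * K) := by
  wlog hyx : y ≤ x generalizing x y
  · rw [abs_sub_comm (f x), abs_sub_comm x]
    exact this y x (by omega)
  have hL : 0 ≤ L := by simpa using (abs_nonneg _).trans (hg 1 0)
  have hstep : ∀ z, |f (z + 1) - f z| ≤ K := fun z => by simpa using hf (z + 1) z
  have hmaps :
      Set.MapsTo f.symm (Finset.uIcc (f y) (f x)) (Finset.Icc (y - L * K) (x + L * K)) := by
    intro m hm
    rw [Finset.coe_uIcc] at hm
    obtain ⟨z, hz, hzm⟩ := exists_abs_sub_le_of_mem_uIcc hstep hyx hm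
    have hdist : |f.symm m - z| ≤ L * K := calc
      |f.symm m - z| = |f.symm m - f.symm (f z)| := by rw [f.symm_apply_apply]
      _ ≤ L * |m - f z| := hg _ _
      _ ≤ L * K := by rw [abs_sub_comm]; exact mul_le_mul_of_nonneg_left hzm hL
    rw [abs_le] at hdist
    rw [Finset.coe_Icc, Set.mem_Icc]
    constructor <;> linarith [hz.1, hz.2]
  have hcard := Finset.card_le_card_of_injOn f.symm hmaps f.symm.injective.injOn
  rw [Int.card_uIcc, Int.card_Icc] at hcard
  rw [abs_of_nonneg (sub_nonneg.2 hyx), ← Int.natCast_natAbs]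
  omega

def IsRoughIsometry (F : ℤ → ℤ) (C : ℤ) : Prop :=
  ∀ x y, |(|F x - F y| - |x - y|)| ≤ C

theorem IsBiLipschitzPerm.exists_isRoughIsometry {f : Equiv.Perm ℤ} (hf : IsBiLipschitzPerm f) :
    ∃ C, IsRoughIsometry f C := by
  obtain ⟨K, L, hK, hL⟩ := hf
  refine ⟨2 * (L * K), fun x y => abs_sub_le_iff.2 ⟨?_, ?_⟩⟩
  · linarith [abs_apply_sub_apply_le hK hL x y]
  · have := abs_apply_sub_apply_le (f := f.symm) hL (by simpa using hK) (f x) (f y)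
    simp only [Equiv.symm_apply_apply] at this
    linarith [mul_comm K L]

def NearLinear (F : ℤ → ℤ) (a : ℤ) : Prop :=
  ∃ M, ∀ x, |F x - a * x| ≤ M

namespace NearLinear

variable {F G : ℤ → ℤ} {a b : ℤ}

theorem neg (hF : NearLinear F a) : NearLinear (-F) (-a) := by
  obtain ⟨M, hM⟩ := hF
  refine ⟨M, fun x => ?_⟩
  rw [Pi.neg_apply, neg_mul, neg_sub_neg, abs_sub_comm]
  exact hM x

theorem comp (hF : NearLinear F a) (hG : NearLinear G b) : NearLinear (F ∘ G) (a * b) := by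
  obtain ⟨M, hM⟩ := hF
  obtain ⟨N, hN⟩ := hG
  refine ⟨M + |a| * N, fun x => ?_⟩
  calc |F (G x) - a * b * x| = |(F (G x) - a * G x) + a * (G x - b * x)| := by ring_nf
    _ ≤ |F (G x) - a * G x| + |a * (G x - b * x)| := abs_add_le _ _
    _ ≤ M + |a| * N := by rw [abs_mul]; gcongr; exacts [hM _, hN x]

theorem slope_unique (hFa : NearLinear F a) (hFb : NearLinear F b) : a = b := by
  obtain ⟨M, hM⟩ := hFa
  obtain ⟨N, hN⟩ := hFb
  by_contra hab
  set x := |M| + |N| + 1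
  have hx : 0 < x := by positivity
  have hlow : x ≤ |(a - b) * x| := by
    rw [abs_mul, abs_of_pos hx]
    exact le_mul_of_one_le_left hx.le (Int.one_le_abs (sub_ne_zero.2 hab))
  have hup : |(a - b) * x| ≤ N + M := calc
    |(a - b) * x| = |(F x - b * x) - (F x - a * x)| := by ring_nf
    _ ≤ |F x - b * x| + |F x - a * x| := abs_sub _ _
    _ ≤ N + M := add_le_add (hN x) (hM x)
  linarith [le_abs_self M, le_abs_self N]

end NearLinear

namespace IsRoughIsometry

variable {F : ℤ → ℤ} {C : ℤ}

theorem nonneg (hF : IsRoughIsometry F C) : 0 ≤ C := by simpa using hF 0 0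

theorem neg (hF : IsRoughIsometry F C) : IsRoughIsometry (-F) C := fun x y => by
  rw [Pi.neg_apply, Pi.neg_apply, neg_sub_neg, abs_sub_comm (F y)]
  exact hF x y

theorem abs_sub_le_or_abs_add_le (hF : IsRoughIsometry F C) (x : ℤ) :
    |F x - F 0 - x| ≤ C ∨ |F x - F 0 + x| ≤ C := by
  have h := hF x 0
  rw [sub_zero, abs_le] at h
  rw [abs_le, abs_le]
  rcases abs_cases (F x - F 0) with ⟨h1, _⟩ | ⟨h1, _⟩ <;>
    rcases abs_cases x with ⟨h2, _⟩ | ⟨h2, _⟩ <;> omega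

theorem abs_le_or_abs_le (hF : IsRoughIsometry F C) {p y : ℤ} (hp : |F p - F 0 - p| ≤ C)
    (hy : |F y - F 0 + y| ≤ C) : |p| ≤ 2 * C ∨ |y| ≤ 2 * C := by
  -- `F p - F y` is within `2C` of `p + y` and its absolute value within `C` of `|p - y|`,
  -- while `||p + y| - |p - y|| = 2 min |p| |y|`.
  have h := hF p y
  have hC := hF.nonneg
  rw [abs_le] at h hp hy
  rcases abs_cases (F p - F y) with ⟨h1, _⟩ | ⟨h1, _⟩ <;>
    rcases abs_cases (p - y) with ⟨h2, _⟩ | ⟨h2, _⟩ <;>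
    rcases abs_cases p with ⟨h3, _⟩ | ⟨h3, _⟩ <;>
    rcases abs_cases y with ⟨h4, _⟩ | ⟨h4, _⟩ <;> omega

theorem nearLinear_one (hF : IsRoughIsometry F C) {p : ℤ} (hp : 2 * C < |p|)
    (hpF : |F p - F 0 - p| ≤ C) : NearLinear F 1 := by
  have hC := hF.nonneg
  refine ⟨|F 0| + 5 * C, fun y => ?_⟩
  rw [one_mul]
  rcases hF.abs_sub_le_or_abs_add_le y with hy | hy
  · calc |F y - y| = |(F y - F 0 - y) + F 0| := by ring_nf
      _ ≤ |F y - F 0 - y| + |F 0| := abs_add_le _ _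
      _ ≤ |F 0| + 5 * C := by linarith
  · have hy' : |y| ≤ 2 * C := (hF.abs_le_or_abs_le hpF hy).resolve_left (by omega)
    calc |F y - y| = |(F y - F 0 + y) + F 0 + (-2) * y| := by ring_nf
      _ ≤ |F y - F 0 + y| + |F 0| + |(-2) * y| := abs_add_three _ _ _
      _ ≤ |F 0| + 5 * C := by rw [abs_mul]; norm_num; linarith

theorem nearLinear_one_or_neg_one (hF : IsRoughIsometry F C) :
    NearLinear F 1 ∨ NearLinear F (-1) := by
  have hp : 2 * C < |2 * C + 1| := by rw [abs_of_pos (by linarith [hF.nonneg])]; omega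
  rcases hF.abs_sub_le_or_abs_add_le (2 * C + 1) with h | h
  · exact .inl (hF.nearLinear_one hp h)
  · have hnegF : |(-F) (2 * C + 1) - (-F) 0 - (2 * C + 1)| ≤ C := by
      rw [Pi.neg_apply, Pi.neg_apply, ← abs_neg]
      convert h using 2
      ring
    exact .inr (by simpa using (hF.neg.nearLinear_one hp hnegF).neg)

end IsRoughIsometry

open Classical in
noncomputable def orientation (f : Equiv.Perm ℤ) : ℤ :=
  if NearLinear f 1 then 1 else -1

theorem orientation_eq_one_or_neg_one (f : Equiv.Perm ℤ) :
    orientation f = 1 ∨ orientation f = -1 := by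
  unfold orientation
  split_ifs
  exacts [.inl rfl, .inr rfl]

theorem orientation_eq_of_nearLinear {f : Equiv.Perm ℤ} {ε : ℤ} (hf : NearLinear f ε)
    (hε : ε = 1 ∨ ε = -1) : orientation f = ε := by
  rcases hε with rfl | rfl
  · exact if_pos hf
  · exact if_neg fun h1 => absurd (h1.slope_unique hf) (by norm_num)

theorem IsBiLipschitzPerm.nearLinear_orientation {f : Equiv.Perm ℤ} (hf : IsBiLipschitzPerm f) :
    NearLinear f (orientation f) := by
  obtain ⟨C, hC⟩ := hf.exists_isRoughIsometry
  unfold orientation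
  split_ifs with h
  exacts [h, hC.nearLinear_one_or_neg_one.resolve_left h]

theorem IsBiLipschitzPerm.orientation_eq_iff {f : Equiv.Perm ℤ} (hf : IsBiLipschitzPerm f)
    {ε : ℤ} (hε : ε = 1 ∨ ε = -1) : orientation f = ε ↔ NearLinear f ε :=
  ⟨fun h => h ▸ hf.nearLinear_orientation, fun h => orientation_eq_of_nearLinear h hε⟩

/-- The orientation map σ : BL(ℤ) → {±1} is a well-defined homomorphism. -/
theorem orientation_homomorphism :
    ∃ σ : Equiv.Perm ℤ → ℤ,
      (∀ f : Equiv.Perm ℤ, IsBiLipschitzPerm f →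
        (σ f = 1 ∨ σ f = -1) ∧
        (σ f = 1 ↔ ∃ M : ℤ, ∀ x : ℤ, |f x - x| ≤ M) ∧
        (σ f = -1 ↔ ∃ M : ℤ, ∀ x : ℤ, |f x + x| ≤ M)) ∧
      (∀ f h : Equiv.Perm ℤ, IsBiLipschitzPerm f → IsBiLipschitzPerm h →
        σ (f * h) = σ f * σ h) := by
  refine ⟨orientation, fun f hf => ⟨orientation_eq_one_or_neg_one f, ?_, ?_⟩, fun f h hf hh => ?_⟩
  · simpa [NearLinear] using hf.orientation_eq_iff (.inl rfl)
  · simpa [NearLinear] using hf.orientation_eq_iff (.inr rfl)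
  · refine orientation_eq_of_nearLinear
      (hf.nearLinear_orientation.comp hh.nearLinear_orientation) ?_
    rcases orientation_eq_one_or_neg_one f with hσf | hσf <;>
      rcases orientation_eq_one_or_neg_one h with hσh | hσh <;> simp [hσf, hσh]
end

section
/- Let f : ℤ → ℤ be a bi-Lipschitz bijection and A_n = {-n, ..., n}. Then |f(A_n) ∩ A_n| / |A_n| → 1 as n → ∞. -/
/-!
Injectivity forces `|f x| → ∞` as `x → -∞`, and since the steps `f (x + 1) - f x` are bounded,
`f` keeps one sign on a far-left ray; replacing `f` by `-f` we may assume `f x → -∞` as `x → -∞`.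
Then `f` is coarsely increasing: if `f y ≤ f x` with `y` far to the right of `x`, the values of `f`
on `(-∞, x]` pass within `K` of `f y` at some `u`, and the lower Lipschitz bound gives
`y - u ≤ L * K`. Counting integers, a coarsely increasing bijection maps `(x, y)` onto `(f x, f y)`
up to bounded error, so `f` lies within bounded distance of `x ↦ ±x + c`. Hence `f` moves only
boundedly many points of `A_n` out of `A_n`.
-/

open Filter Finset Function

namespace Filter

variable {α β : Type*} [LinearOrder β] {l : Filter α} {f : α → β} {c : β}

theorem Tendsto.atBot_of_sup (h : Tendsto f l (atBot ⊔ atTop)) (hc : ∀ᶠ x in l, f x < c) :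
    Tendsto f l atBot :=
  tendsto_atBot.2 fun t => by
    filter_upwards [h (union_mem_sup (Iic_mem_atBot t) (Ici_mem_atTop c)), hc] with x hx hxc
    exact hx.resolve_right (not_le.2 hxc)

theorem Tendsto.atTop_of_sup (h : Tendsto f l (atBot ⊔ atTop)) (hc : ∀ᶠ x in l, c < f x) :
    Tendsto f l atTop :=
  tendsto_atTop.2 fun t => by
    filter_upwards [h (union_mem_sup (Iic_mem_atBot c) (Ici_mem_atTop t)), hc] with x hx hxc
    exact hx.resolve_left (not_le.2 hxc)

end Filter

theorem tendsto_natCast_div_natCast_of_le_of_le_add {a b : ℕ → ℕ} {C : ℕ} (hab : ∀ n, a n ≤ b n)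
    (hba : ∀ n, b n ≤ a n + C) (hb : Tendsto b atTop atTop) :
    Tendsto (fun n => (a n : ℝ) / b n) atTop (nhds 1) := by
  have hb' : Tendsto (fun n => (b n : ℝ)) atTop atTop := tendsto_natCast_atTop_atTop.comp hb
  have hlow : Tendsto (fun n => 1 - (C : ℝ) / b n) atTop (nhds 1) := by
    simpa using tendsto_const_nhds.sub (tendsto_const_nhds.div_atTop hb')
  refine tendsto_of_tendsto_of_tendsto_of_le_of_le' hlow tendsto_const_nhds ?_ ?_
  · filter_upwards [hb'.eventually_gt_atTop 0] with n hn
    rw [one_sub_div hn.ne']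
    gcongr
    have : (b n : ℝ) ≤ a n + C := by exact_mod_cast hba n
    linarith
  · filter_upwards [hb'.eventually_gt_atTop 0] with n hn
    exact div_le_one_of_le₀ (by exact_mod_cast hab n) hn.le

namespace Int

variable {f : ℤ → ℤ} {K L M : ℤ}

theorem exists_abs_sub_le_of_le_of_le (hstep : ∀ x, |f (x + 1) - f x| ≤ K) {a b t : ℤ}
    (hab : a ≤ b) (ha : f a ≤ t) (hb : t ≤ f b) : ∃ u, a ≤ u ∧ u ≤ b ∧ |f u - t| ≤ K := by
  induction b, hab using Int.leInduction with
  | base =>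
    exact ⟨a, le_rfl, le_rfl, by simpa [le_antisymm ha hb] using (abs_nonneg _).trans (hstep a)⟩
  | succ b hab ih =>
    by_cases hbt : t ≤ f b
    · obtain ⟨u, hau, hub, hu⟩ := ih hbt
      exact ⟨u, hau, hub.trans (le_add_of_nonneg_right zero_le_one), hu⟩
    · have := abs_le.1 (hstep b)
      exact ⟨b + 1, by omega, le_rfl, abs_le.2 ⟨by omega, by omega⟩⟩

theorem forall_lt_neg_or_forall_gt_of_step_le (hstep : ∀ x, |f (x + 1) - f x| ≤ K) {b : ℤ}
    (h : ∀ x ≤ b, f x < -K ∨ K < f x) : (∀ x ≤ b, f x < -K) ∨ (∀ x ≤ b, K < f x) := by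
  have hK : 0 ≤ K := (abs_nonneg _).trans (hstep 0)
  have hsign : ∀ x ≤ b, (f x < -K ↔ f b < -K) := by
    intro x hx
    induction x, hx using Int.leInductionDown with
    | base => rfl
    | pred x hx ih =>
      have := abs_le.1 (hstep (x - 1))
      rw [sub_add_cancel] at this
      have := h x hx
      have := h (x - 1) (by omega)
      omega
  by_cases hb : f b < -K
  · exact .inl fun x hx => (hsign x hx).2 hb
  · exact .inr fun x hx => (h x hx).resolve_left fun hx' => hb ((hsign x hx).1 hx')

theorem tendsto_atBot_atBot_or_atTop (hf : Injective f) (hstep : ∀ x, |f (x + 1) - f x| ≤ K) :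
    Tendsto f atBot atBot ∨ Tendsto f atBot atTop := by
  have hcof : Tendsto f atBot (atBot ⊔ atTop) :=
    (Int.cofinite_eq ▸ hf.tendsto_cofinite : Tendsto f (atBot ⊔ atTop) _).mono_left le_sup_left
  obtain ⟨b, hb⟩ := eventually_atBot.1 <|
    hcof.eventually (union_mem_sup (Iio_mem_atBot (-K)) (Ioi_mem_atTop K))
  exact (forall_lt_neg_or_forall_gt_of_step_le hstep hb).imp
    (fun h => hcof.atBot_of_sup (eventually_atBot.2 ⟨b, h⟩))
    (fun h => hcof.atTop_of_sup (eventually_atBot.2 ⟨b, h⟩))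

theorem lt_of_mul_lt_sub (hstep : ∀ x, |f (x + 1) - f x| ≤ K)
    (hLipInv : ∀ x y, |x - y| ≤ L * |f x - f y|) (hbot : Tendsto f atBot atBot) {x y : ℤ}
    (hxy : L * K < y - x) : f x < f y := by
  by_contra! hyx
  have hL : 0 ≤ L := by
    have := hLipInv 1 0
    norm_num at this
    nlinarith [abs_nonneg (f 1 - f 0)]
  obtain ⟨a, hay, hax⟩ :=
    ((hbot.eventually (eventually_le_atBot (f y))).and (eventually_le_atBot x)).exists
  obtain ⟨u, hau, hux, hu⟩ := exists_abs_sub_le_of_le_of_le hstep hax hay hyx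
  have := (hLipInv u y).trans (mul_le_mul_of_nonneg_left hu hL)
  linarith [neg_abs_le (u - y)]

theorem abs_sub_sub_le_of_lt_sub (hf : Bijective f) (hmono : ∀ x y, M < y - x → f x < f y)
    {x y : ℤ} (hxy : M < y - x) : |f y - f x - (y - x)| ≤ 2 * M + 2 := by
  have hM : 0 ≤ M := not_lt.1 fun h => lt_irrefl _ (hmono 0 0 (by omega))
  obtain ⟨g, hgf, hfg⟩ := bijective_iff_has_inverse.1 hf
  have hlow : #(Ioo (x + M) (y - M)) ≤ #(Ioo (f x) (f y)) := by
    refine card_le_card_of_injOn f (fun z hz => ?_) hf.injective.injOn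
    simp only [coe_Ioo, Set.mem_Ioo] at hz ⊢
    exact ⟨hmono x z (by omega), hmono z y (by omega)⟩
  have hup : #(Ioo (f x) (f y)) ≤ #(Icc (x - M) (y + M)) := by
    refine card_le_card_of_injOn g (fun z hz => ?_) hfg.injective.injOn
    simp only [coe_Ioo, coe_Icc, Set.mem_Ioo, Set.mem_Icc] at hz ⊢
    constructor
    · by_contra! h
      have := hmono (g z) x (by omega)
      rw [hfg z] at this
      omega
    · by_contra! h
      have := hmono y (g z) (by omega)
      rw [hfg z] at this
      omega
  rw [Int.card_Ioo, Int.card_Ioo] at hlow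
  rw [Int.card_Ioo, Int.card_Icc] at hup
  have := hmono x y hxy
  rw [abs_le]
  omega

theorem abs_sub_sub_le (hf : Bijective f) (hmono : ∀ x y, M < y - x → f x < f y) (x y : ℤ) :
    |f y - f x - (y - x)| ≤ 4 * M + 4 := by
  have hx := abs_le.1 <| abs_sub_sub_le_of_lt_sub hf hmono (x := min x y - M - 1) (y := x) (by omega)
  have hy := abs_le.1 <| abs_sub_sub_le_of_lt_sub hf hmono (x := min x y - M - 1) (y := y) (by omega)
  rw [abs_le]
  omega

theorem exists_abs_sub_mul_add_le (hf : Bijective f) (hstep : ∀ x, |f (x + 1) - f x| ≤ K)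
    (hLipInv : ∀ x y, |x - y| ≤ L * |f x - f y|) :
    ∃ s c C : ℤ, |s| = 1 ∧ ∀ x, |f x - (s * x + c)| ≤ C := by
  rcases tendsto_atBot_atBot_or_atTop hf.injective hstep with hbot | htop
  · refine ⟨1, f 0, 4 * (L * K) + 4, by simp, fun x => ?_⟩
    convert abs_sub_sub_le hf (fun x y => lt_of_mul_lt_sub hstep hLipInv hbot) 0 x using 2
    ring
  · have hstep' : ∀ x, |(-f) (x + 1) - (-f) x| ≤ K := fun x => by
      rw [Pi.neg_apply, Pi.neg_apply, neg_sub_neg, abs_sub_comm]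
      exact hstep x
    have hLipInv' : ∀ x y, |x - y| ≤ L * |(-f) x - (-f) y| := fun x y => by
      rw [Pi.neg_apply, Pi.neg_apply, neg_sub_neg, abs_sub_comm (f y)]
      exact hLipInv x y
    have hbot : Tendsto (-f) atBot atBot := tendsto_neg_atTop_atBot.comp htop
    refine ⟨-1, f 0, 4 * (L * K) + 4, by simp, fun x => ?_⟩
    have := abs_sub_sub_le (neg_bijective.comp hf)
      (fun x y => lt_of_mul_lt_sub hstep' hLipInv' hbot) 0 x
    rw [← abs_neg]
    convert this using 2
    simp only [comp_apply]
    ring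

theorem exists_abs_le_abs_add (hf : Bijective f) (hstep : ∀ x, |f (x + 1) - f x| ≤ K)
    (hLipInv : ∀ x y, |x - y| ≤ L * |f x - f y|) : ∃ C : ℕ, ∀ x, |f x| ≤ |x| + C := by
  obtain ⟨s, c, C, hs, hC⟩ := exists_abs_sub_mul_add_le hf hstep hLipInv
  refine ⟨(|c| + C).toNat, fun x => ?_⟩
  have hsc : |s * x + c| ≤ |x| + |c| := by
    simpa [abs_mul, hs] using abs_add_le (s * x) c
  have := abs_sub_abs_le_abs_sub (f x) (s * x + c)
  have := hC x
  omega

theorem card_Icc_le_card_image_inter_add (hf : Injective f) {C : ℕ} (hC : ∀ x, |f x| ≤ |x| + C)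
    (n : ℤ) : #(Icc (-n) n) ≤ #((Icc (-n) n).image f ∩ Icc (-n) n) + 2 * C := by
  rw [← filter_mem_eq_inter, filter_image, card_image_of_injective _ hf]
  have hsub : Icc (-(n - C)) (n - C) ⊆ (Icc (-n) n).filter (fun x => f x ∈ Icc (-n) n) := by
    intro x hx
    rw [mem_Icc] at hx
    have := abs_le.1 (hC x)
    have := abs_le.2 hx
    simp only [mem_Icc, mem_filter]
    omega
  have := card_le_card hsub
  rw [Int.card_Icc] at this ⊢
  omega

end Int

/-- Følner property: for a bi-Lipschitz bijection f of ℤ and A_n = [-n, n],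
|f(A_n) ∩ A_n| / |A_n| → 1. -/
theorem folner_property
    (f : ℤ → ℤ) (hf : Function.Bijective f) (K L : ℤ)
    (hLip : ∀ x y : ℤ, |f x - f y| ≤ K * |x - y|)
    (hLipInv : ∀ x y : ℤ, |x - y| ≤ L * |f x - f y|) :
    Tendsto (fun n : ℕ =>
      ((((Finset.Icc (-(n : ℤ)) n).image f) ∩ Finset.Icc (-(n : ℤ)) n).card : ℝ) /
        ((Finset.Icc (-(n : ℤ)) n).card : ℝ)) atTop (nhds 1) := by
  have hstep : ∀ x, |f (x + 1) - f x| ≤ K := fun x => by simpa using hLip (x + 1) x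
  obtain ⟨C, hC⟩ := Int.exists_abs_le_abs_add hf hstep hLipInv
  refine tendsto_natCast_div_natCast_of_le_of_le_add (fun n => card_le_card inter_subset_right)
    (fun n => Int.card_Icc_le_card_image_inter_add hf.injective hC n) ?_
  refine tendsto_atTop_mono (fun n => ?_) tendsto_id
  simp only [Int.card_Icc, id]
  omega
end

section
/- There is no finitely additive probability measure μ on the power set of ℤ² that is invariant under all bi-Lipschitz bijections of ℤ². (In particular, there is no mean on ℤ² \ {0} invariant under the linear action of SL(2, ℤ).) -/
/-- There is no finitely additive probability measure on ℤ² invariant under all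
bi-Lipschitz bijections of ℤ² (ℓ¹ metric). -/
theorem no_invariant_mean_on_Z2 :
    ¬ ∃ μ : Set (ℤ × ℤ) → ℝ,
      (∀ A : Set (ℤ × ℤ), 0 ≤ μ A) ∧
      μ Set.univ = 1 ∧
      (∀ A B : Set (ℤ × ℤ), Disjoint A B → μ (A ∪ B) = μ A + μ B) ∧
      (∀ f : ℤ × ℤ → ℤ × ℤ, Function.Bijective f →
        (∃ K : ℤ, (∀ p q : ℤ × ℤ,
            |(f p).1 - (f q).1| + |(f p).2 - (f q).2| ≤ K * (|p.1 - q.1| + |p.2 - q.2|)) ∧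
          (∀ p q : ℤ × ℤ,
            |p.1 - q.1| + |p.2 - q.2| ≤ K * (|(f p).1 - (f q).1| + |(f p).2 - (f q).2|))) →
        ∀ A : Set (ℤ × ℤ), μ (f '' A) = μ A) := by
  rintro ⟨μ, hnn, huniv, hadd, hinv⟩
  -- every set has measure at most 1
  have hle1 : ∀ A : Set (ℤ × ℤ), μ A ≤ 1 := by
    intro A
    have h := hadd A Aᶜ disjoint_compl_right
    rw [Set.union_compl_self, huniv] at h
    have := hnn Aᶜ
    linarith
  -- a set with infinitely many pairwise disjoint equal-measure images has measure 0
  have hzero : ∀ (S : Set (ℤ × ℤ)) (g : ℕ → (ℤ × ℤ) → (ℤ × ℤ)),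
      (∀ k, μ (g k '' S) = μ S) →
      (∀ k l, k ≠ l → Disjoint (g k '' S) (g l '' S)) →
      μ S = 0 := by
    intro S g heq hdis
    have hempty : μ (∅ : Set (ℤ × ℤ)) = 0 := by
      have h := hadd ∅ ∅ (by simp)
      simp at h
      linarith
    set U : ℕ → Set (ℤ × ℤ) := fun n => Nat.rec ∅ (fun n Un => Un ∪ g n '' S) n with hU
    have hUd : ∀ n m, n ≤ m → Disjoint (U n) (g m '' S) := by
      intro n
      induction n with
      | zero => intro m _; simp [hU]
      | succ n ih =>
        intro m hm
        have hstep : U (n + 1) = U n ∪ g n '' S := rfl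
        rw [hstep]
        exact Disjoint.union_left (ih m (by omega)) (hdis n m (by omega))
    have hUm : ∀ n, μ (U n) = n * μ S := by
      intro n
      induction n with
      | zero => simpa [hU] using hempty
      | succ n ih =>
        have hstep : U (n + 1) = U n ∪ g n '' S := rfl
        rw [hstep, hadd _ _ (hUd n n le_rfl), ih, heq]
        push_cast; ring
    by_contra hne
    have hpos : 0 < μ S := lt_of_le_of_ne (hnn S) (Ne.symm hne)
    obtain ⟨n, hn⟩ := exists_nat_gt (1 / μ S)
    have h1 : 1 < (n : ℝ) * μ S := (div_lt_iff₀ hpos).mp hn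
    have h2 : μ (U n) ≤ 1 := hle1 _
    rw [hUm] at h2
    linarith
  -- horizontal shears preserve μ
  have hshear1 : ∀ (m : ℤ) (A : Set (ℤ × ℤ)),
      μ ((fun p : ℤ × ℤ => (p.1 + m * p.2, p.2)) '' A) = μ A := by
    intro m A
    apply hinv
    · constructor
      · intro p q h
        simp only [Prod.mk.injEq] at h
        obtain ⟨h1, h2⟩ := h
        have h3 : m * p.2 = m * q.2 := by rw [h2]
        have h4 : p.1 = q.1 := by linarith
        exact Prod.ext h4 h2
      · intro q
        exact ⟨(q.1 - m * q.2, q.2), by simp⟩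
    · refine ⟨|m| + 1, ?_, ?_⟩
      · intro p q
        simp only
        have h1 : p.1 + m * p.2 - (q.1 + m * q.2) = (p.1 - q.1) + m * (p.2 - q.2) := by ring
        rw [h1]
        have h2 := abs_add_le (p.1 - q.1) (m * (p.2 - q.2))
        rw [abs_mul] at h2
        nlinarith [abs_nonneg (p.1 - q.1), abs_nonneg (p.2 - q.2), abs_nonneg m]
      · intro p q
        simp only
        have h1 : p.1 - q.1 = (p.1 + m * p.2 - (q.1 + m * q.2)) + (-(m * (p.2 - q.2))) := by ring
        have h2 := abs_add_le (p.1 + m * p.2 - (q.1 + m * q.2)) (-(m * (p.2 - q.2)))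
        rw [abs_neg, abs_mul] at h2
        rw [h1]
        nlinarith [abs_nonneg (p.1 + m * p.2 - (q.1 + m * q.2)), abs_nonneg (p.2 - q.2),
          abs_nonneg m]
  -- vertical shears preserve μ
  have hshear2 : ∀ (m : ℤ) (A : Set (ℤ × ℤ)),
      μ ((fun p : ℤ × ℤ => (p.1, p.2 + m * p.1)) '' A) = μ A := by
    intro m A
    apply hinv
    · constructor
      · intro p q h
        simp only [Prod.mk.injEq] at h
        obtain ⟨h1, h2⟩ := h
        have h3 : m * p.1 = m * q.1 := by rw [h1]
        have h4 : p.2 = q.2 := by linarith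
        exact Prod.ext h1 h4
      · intro q
        exact ⟨(q.1, q.2 - m * q.1), by simp⟩
    · refine ⟨|m| + 1, ?_, ?_⟩
      · intro p q
        simp only
        have h1 : p.2 + m * p.1 - (q.2 + m * q.1) = (p.2 - q.2) + m * (p.1 - q.1) := by ring
        rw [h1]
        have h2 := abs_add_le (p.2 - q.2) (m * (p.1 - q.1))
        rw [abs_mul] at h2
        nlinarith [abs_nonneg (p.1 - q.1), abs_nonneg (p.2 - q.2), abs_nonneg m]
      · intro p q
        simp only
        have h1 : p.2 - q.2 = (p.2 + m * p.1 - (q.2 + m * q.1)) + (-(m * (p.1 - q.1))) := by ring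
        have h2 := abs_add_le (p.2 + m * p.1 - (q.2 + m * q.1)) (-(m * (p.1 - q.1)))
        rw [abs_neg, abs_mul] at h2
        rw [h1]
        nlinarith [abs_nonneg (p.2 + m * p.1 - (q.2 + m * q.1)), abs_nonneg (p.1 - q.1),
          abs_nonneg m]
  -- horizontal translations preserve μ
  have htrans : ∀ (k : ℤ) (A : Set (ℤ × ℤ)),
      μ ((fun p : ℤ × ℤ => (p.1 + k, p.2)) '' A) = μ A := by
    intro k A
    apply hinv
    · constructor
      · intro p q h
        simp only [Prod.mk.injEq] at h
        exact Prod.ext (by omega) h.2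
      · intro q
        exact ⟨(q.1 - k, q.2), by simp⟩
    · refine ⟨1, ?_, ?_⟩ <;> intro p q <;> simp only <;>
        (have h1 : p.1 + k - (q.1 + k) = p.1 - q.1 := by ring) <;> rw [h1] <;> linarith
  -- the four pieces
  set X : Set (ℤ × ℤ) := {p | |p.2| < |p.1|} with hX
  set Y : Set (ℤ × ℤ) := {p | |p.1| < |p.2|} with hY
  set Dp : Set (ℤ × ℤ) := {p | p.2 = p.1} with hDp
  set Dm : Set (ℤ × ℤ) := {p | p.2 = -p.1 ∧ p.1 ≠ 0} with hDm
  -- μ Y = 0 via horizontal shears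
  have hμY : μ Y = 0 := by
    apply hzero Y (fun k p => (p.1 + (2 * ((k : ℤ) + 1)) * p.2, p.2))
    · intro k; exact hshear1 _ Y
    · intro k l hkl
      rw [Set.disjoint_left]
      rintro p ⟨⟨x, y⟩, hy, rfl⟩ ⟨⟨x', y'⟩, hy', heqp⟩
      simp only [Prod.mk.injEq] at heqp
      obtain ⟨he1, he2⟩ := heqp
      subst he2
      simp only [hY, Set.mem_setOf_eq] at hy hy'
      have hc : x' - x = (2 * ((k : ℤ) + 1) - 2 * ((l : ℤ) + 1)) * y' := by linarith
      have h0 : (2 * ((k : ℤ) + 1) - 2 * ((l : ℤ) + 1)) ≠ 0 := by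
        intro h; apply hkl; omega
      have h1 : (2 : ℤ) ≤ |2 * ((k : ℤ) + 1) - 2 * ((l : ℤ) + 1)| := by
        rcases lt_or_gt_of_ne h0 with h | h
        · rw [abs_of_neg h]; omega
        · rw [abs_of_pos h]; omega
      have h2 : |x' - x| = |2 * ((k : ℤ) + 1) - 2 * ((l : ℤ) + 1)| * |y'| := by
        rw [hc, abs_mul]
      have h3 : |x' - x| ≤ |x'| + |x| := by
        have := abs_add_le x' (-x)
        rw [abs_neg] at this
        simpa [sub_eq_add_neg] using this
      nlinarith [abs_nonneg y']
  -- μ X = 0 via vertical shears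
  have hμX : μ X = 0 := by
    apply hzero X (fun k p => (p.1, p.2 + (2 * ((k : ℤ) + 1)) * p.1))
    · intro k; exact hshear2 _ X
    · intro k l hkl
      rw [Set.disjoint_left]
      rintro p ⟨⟨x, y⟩, hy, rfl⟩ ⟨⟨x', y'⟩, hy', heqp⟩
      simp only [Prod.mk.injEq] at heqp
      obtain ⟨he1, he2⟩ := heqp
      subst he1
      simp only [hX, Set.mem_setOf_eq] at hy hy'
      have hc : y' - y = (2 * ((k : ℤ) + 1) - 2 * ((l : ℤ) + 1)) * x' := by linarith
      have h0 : (2 * ((k : ℤ) + 1) - 2 * ((l : ℤ) + 1)) ≠ 0 := by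
        intro h; apply hkl; omega
      have h1 : (2 : ℤ) ≤ |2 * ((k : ℤ) + 1) - 2 * ((l : ℤ) + 1)| := by
        rcases lt_or_gt_of_ne h0 with h | h
        · rw [abs_of_neg h]; omega
        · rw [abs_of_pos h]; omega
      have h2 : |y' - y| = |2 * ((k : ℤ) + 1) - 2 * ((l : ℤ) + 1)| * |x'| := by
        rw [hc, abs_mul]
      have h3 : |y' - y| ≤ |y'| + |y| := by
        have := abs_add_le y' (-y)
        rw [abs_neg] at this
        simpa [sub_eq_add_neg] using this
      nlinarith [abs_nonneg x']
  -- μ Dp = 0 via translations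
  have hμDp : μ Dp = 0 := by
    apply hzero Dp (fun k p => (p.1 + (k : ℤ), p.2))
    · intro k; exact htrans _ Dp
    · intro k l hkl
      rw [Set.disjoint_left]
      rintro p ⟨⟨x, y⟩, hy, rfl⟩ ⟨⟨x', y'⟩, hy', heqp⟩
      simp only [Prod.mk.injEq] at heqp
      simp only [hDp, Set.mem_setOf_eq] at hy hy'
      exact hkl (by omega)
  -- μ Dm = 0 via translations
  have hμDm : μ Dm = 0 := by
    apply hzero Dm (fun k p => (p.1 + (k : ℤ), p.2))
    · intro k; exact htrans _ Dm
    · intro k l hkl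
      rw [Set.disjoint_left]
      rintro p ⟨⟨x, y⟩, hy, rfl⟩ ⟨⟨x', y'⟩, hy', heqp⟩
      simp only [Prod.mk.injEq] at heqp
      simp only [hDm, Set.mem_setOf_eq] at hy hy'
      exact hkl (by omega)
  -- the four pieces partition ℤ²
  have hd1 : Disjoint X Y := by
    rw [Set.disjoint_left]
    intro p hp hq
    simp only [hX, hY, Set.mem_setOf_eq] at hp hq
    linarith
  have hd2 : Disjoint Dp Dm := by
    rw [Set.disjoint_left]
    intro p hp hq
    simp only [hDp, hDm, Set.mem_setOf_eq] at hp hq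
    omega
  have hd3 : Disjoint (X ∪ Y) (Dp ∪ Dm) := by
    rw [Set.disjoint_left]
    intro p hp hq
    simp only [hX, hY, hDp, hDm, Set.mem_union, Set.mem_setOf_eq] at hp hq
    have habs : |p.2| = |p.1| := by
      rcases hq with h | ⟨h, _⟩
      · rw [h]
      · rw [h, abs_neg]
    rcases hp with h | h <;> omega
  have hcov : (X ∪ Y) ∪ (Dp ∪ Dm) = Set.univ := by
    ext p
    simp only [hX, hY, hDp, hDm, Set.mem_union, Set.mem_setOf_eq, Set.mem_univ, iff_true]
    rcases lt_trichotomy |p.1| |p.2| with h | h | h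
    · exact Or.inl (Or.inr h)
    · rcases abs_eq_abs.mp h with h' | h'
      · by_cases hz : p.1 = 0
        · exact Or.inr (Or.inl (by omega))
        · rcases eq_or_ne p.2 p.1 with h2 | h2
          · exact Or.inr (Or.inl h2)
          · exact Or.inr (Or.inr ⟨by omega, hz⟩)
      · by_cases hz : p.1 = 0
        · exact Or.inr (Or.inl (by omega))
        · exact Or.inr (Or.inr ⟨by omega, hz⟩)
    · exact Or.inl (Or.inl h)
  have hfin : (1 : ℝ) = 0 := by
    have e1 : μ ((X ∪ Y) ∪ (Dp ∪ Dm)) = μ (X ∪ Y) + μ (Dp ∪ Dm) := hadd _ _ hd3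
    have e2 : μ (X ∪ Y) = μ X + μ Y := hadd _ _ hd1
    have e3 : μ (Dp ∪ Dm) = μ Dp + μ Dm := hadd _ _ hd2
    rw [hcov, huniv] at e1
    rw [e2, e3, hμX, hμY, hμDp, hμDm] at e1
    linarith
  exact one_ne_zero hfin
end

section
/- There exists a finitely additive probability measure μ on the power set of ℤ such that μ(f(A)) = μ(A) for every subset A ⊆ ℤ and every bi-Lipschitz bijection f : ℤ → ℤ. -/
/-!
Take an ultrafilter limit of the uniform probability measures on `[-n, n]`. The limit is
invariant under a bijection `f` as soon as `#([-n, n] \ f⁻¹[-n, n]) = o(n)`, and for a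
bi-Lipschitz `f` this number is even bounded. Indeed `f` moves by at most `K` per step while
`|f x| → ∞`, so `f` keeps a constant sign near `+∞` and near `-∞`; by surjectivity the two signs
differ, and up to replacing `f` by `-f` it tends to `±∞` at `±∞`. For each level `t`, the points
where `f` enters `(t, t + K]` then lie within `|L| K` of each other (discrete intermediate values
and the co-Lipschitz bound), so `{f ≤ t}` and `{f > t}` are half-lines up to a bounded error, and
counting the `2n + 1` preimages of `[-n, n]` places the cuts for `t = -n - 1` and `t = n` near
`-n` and `n`.
-/

open Filter Topology Finset Function
open scoped Classical

section RelDensity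

variable {α : Type*}

noncomputable def relDensity (s : Finset α) (A : Set α) : ℝ := #{x ∈ s | x ∈ A} / #s

lemma relDensity_nonneg (s : Finset α) (A : Set α) : 0 ≤ relDensity s A := by
  unfold relDensity; positivity

lemma relDensity_le_one (s : Finset α) (A : Set α) : relDensity s A ≤ 1 :=
  div_le_one_of_le₀ (by exact_mod_cast card_filter_le _ _) (by positivity)

lemma relDensity_univ {s : Finset α} (hs : s.Nonempty) : relDensity s Set.univ = 1 := by
  simp [relDensity, hs.ne_empty]

lemma relDensity_union (s : Finset α) {A B : Set α} (h : Disjoint A B) :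
    relDensity s (A ∪ B) = relDensity s A + relDensity s B := by
  simp only [relDensity, ← add_div, Set.mem_union, filter_or]
  rw [card_union_of_disjoint (disjoint_filter.2 fun _ _ hA => Set.disjoint_left.1 h hA),
    Nat.cast_add]

lemma card_filter_mem_image {f : α → α} (hf : Bijective f) (s : Finset α) (A : Set α) :
    #{x ∈ s | x ∈ f '' A} = #{x ∈ s.preimage f hf.injective.injOn | x ∈ A} := by
  symm
  refine card_bij (fun x _ => f x) ?_ (fun _ _ _ _ h => hf.injective h) ?_
  · intro x hx
    simp only [mem_filter, mem_preimage] at hx ⊢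
    exact ⟨hx.1, x, hx.2, rfl⟩
  · simp only [mem_filter, mem_preimage]
    rintro _ ⟨hy, x, hx, rfl⟩
    exact ⟨x, ⟨hy, hx⟩, rfl⟩

lemma abs_card_filter_sub_le [DecidableEq α] {s t : Finset α} (h : #s = #t) (A : Set α) :
    |(#{x ∈ t | x ∈ A} : ℤ) - #{x ∈ s | x ∈ A}| ≤ #(s \ t) := by
  have key (u v : Finset α) : #{x ∈ u | x ∈ A} ≤ #{x ∈ v | x ∈ A} + #(u \ v) := by
    calc #{x ∈ u | x ∈ A} ≤ #({x ∈ v | x ∈ A} ∪ (u \ v)) := by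
          refine card_le_card fun x hx => ?_
          simp only [mem_filter, mem_union, Finset.mem_sdiff] at hx ⊢
          tauto
      _ ≤ _ := card_union_le _ _
  have hts := key t s
  have hst := key s t
  rw [card_sdiff_comm h.symm] at hts
  rw [abs_le]
  omega

lemma card_preimage_of_bijective {β : Type*} {f : α → β} (hf : Bijective f) (s : Finset β) :
    #(s.preimage f hf.injective.injOn) = #s := by
  rw [card_preimage, filter_true_of_mem fun x _ => hf.surjective.range_eq ▸ Set.mem_univ x]

lemma abs_relDensity_image_sub_le [DecidableEq α] {f : α → α} (hf : Bijective f)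
    (s : Finset α) (A : Set α) :
    |relDensity s (f '' A) - relDensity s A|
      ≤ #(s \ s.preimage f hf.injective.injOn) / #s := by
  rw [relDensity, relDensity, card_filter_mem_image hf, ← sub_div, abs_div, Nat.abs_cast]
  gcongr
  exact_mod_cast abs_card_filter_sub_le (card_preimage_of_bijective hf s).symm A

end RelDensity

section UltralimitDensity

variable {α : Type*} (F : ℕ → Finset α) (U : Ultrafilter ℕ)

noncomputable def ultralimitDensity (A : Set α) : ℝ :=
  limUnder (U : Filter ℕ) fun n => relDensity (F n) A

lemma tendsto_ultralimitDensity (A : Set α) :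
    Tendsto (fun n => relDensity (F n) A) U (𝓝 (ultralimitDensity F U A)) := by
  refine tendsto_nhds_limUnder ?_
  obtain ⟨x, -, hx⟩ := (isCompact_Icc (a := (0 : ℝ)) (b := 1)).ultrafilter_le_nhds
    (U.map fun n => relDensity (F n) A) (by
      rw [Ultrafilter.coe_map, le_principal_iff]
      exact mem_map.2 <| univ_mem' fun _ => ⟨relDensity_nonneg _ A, relDensity_le_one _ A⟩)
  exact ⟨x, hx⟩

lemma ultralimitDensity_nonneg (A : Set α) : 0 ≤ ultralimitDensity F U A :=
  ge_of_tendsto' (tendsto_ultralimitDensity F U A) fun _ => relDensity_nonneg _ A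

lemma ultralimitDensity_univ (hF : ∀ n, (F n).Nonempty) : ultralimitDensity F U Set.univ = 1 :=
  tendsto_nhds_unique (tendsto_ultralimitDensity F U _) <| by
    simpa only [relDensity_univ (hF _)] using tendsto_const_nhds

lemma ultralimitDensity_union {A B : Set α} (h : Disjoint A B) :
    ultralimitDensity F U (A ∪ B) = ultralimitDensity F U A + ultralimitDensity F U B :=
  tendsto_nhds_unique (tendsto_ultralimitDensity F U _) <| by
    simpa only [relDensity_union _ h] using
      (tendsto_ultralimitDensity F U A).add (tendsto_ultralimitDensity F U B)

lemma ultralimitDensity_image [DecidableEq α] {f : α → α} (hf : Bijective f)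
    (hF : Tendsto (fun n => (#(F n \ (F n).preimage f hf.injective.injOn) : ℝ) / #(F n)) U (𝓝 0))
    (A : Set α) : ultralimitDensity F U (f '' A) = ultralimitDensity F U A := by
  have hdiff : Tendsto (fun n => relDensity (F n) (f '' A) - relDensity (F n) A) U (𝓝 0) :=
    squeeze_zero_norm (fun n => abs_relDensity_image_sub_le hf (F n) A) hF
  refine tendsto_nhds_unique (tendsto_ultralimitDensity F U _) ?_
  simpa using (tendsto_ultralimitDensity F U A).add hdiff

end UltralimitDensity

section BiLipschitz

variable {f : ℤ → ℤ} {K L : ℤ}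

lemma exists_crossing (hstep : ∀ x, |f (x + 1) - f x| ≤ K) {t u v : ℤ} (huv : u ≤ v)
    (hu : f u ≤ t) (hv : t < f v) : ∃ w, u ≤ w ∧ w ≤ v ∧ t < f w ∧ f w ≤ t + K := by
  induction v, huv using Int.leInduction with
  | base => omega
  | succ v huv ih =>
    by_cases hv' : t < f v
    · obtain ⟨w, huw, hwv, hw⟩ := ih hv'
      exact ⟨w, huw, by omega, hw⟩
    · have := (abs_le.1 (hstep v)).2
      exact ⟨v + 1, by omega, le_rfl, hv, by omega⟩

lemma tendsto_abs_atTop_of_coLipschitz (hco : ∀ x y, |x - y| ≤ L * |f x - f y|) :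
    Tendsto (fun x => |f x|) atTop atTop := by
  have hL : 0 < L := by
    have h10 := hco 1 0
    norm_num at h10
    by_contra! hL
    nlinarith [abs_nonneg (f 1 - f 0)]
  refine tendsto_atTop.2 fun b => (eventually_ge_atTop (L * (b + |f 0|))).mono fun x hx => ?_
  have hx0 : x ≤ L * (|f x| + |f 0|) := calc
    x ≤ |x - 0| := by simp [le_abs_self]
    _ ≤ L * |f x - f 0| := hco x 0
    _ ≤ L * (|f x| + |f 0|) := by gcongr; exact abs_sub _ _
  exact le_of_mul_le_mul_left (by linarith) hL

lemma tendsto_atTop_or_atBot (hstep : ∀ x, |f (x + 1) - f x| ≤ K)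
    (hco : ∀ x y, |x - y| ≤ L * |f x - f y|) :
    Tendsto f atTop atTop ∨ Tendsto f atTop atBot := by
  obtain ⟨M, hM⟩ :=
    eventually_atTop.1 ((tendsto_abs_atTop_of_coLipschitz hco).eventually_gt_atTop K)
  have hK : 0 ≤ K := (abs_nonneg _).trans (hstep 0)
  have persist (s : ℤ) (hs : s = 1 ∨ s = -1) (h : 0 < s * f M) : ∀ x ≥ M, 0 < s * f x := by
    intro x hx
    induction x, hx using Int.leInduction with
    | base => exact h
    | succ x hx ih =>
      have := abs_le.1 (hstep x)
      have := lt_abs.1 (hM (x + 1) (by omega))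
      rcases hs with rfl | rfl <;> omega
  rcases lt_abs.1 (hM M le_rfl) with hpos | hneg
  · left
    refine (tendsto_abs_atTop_of_coLipschitz hco).congr' <|
      (eventually_ge_atTop M).mono fun x hx => ?_
    have := persist 1 (.inl rfl) (by omega) x hx
    exact abs_of_pos (by omega)
  · right
    refine tendsto_neg_atTop_iff.1 <| (tendsto_abs_atTop_of_coLipschitz hco).congr' <|
      (eventually_ge_atTop M).mono fun x hx => ?_
    have := persist (-1) (.inr rfl) (by omega) x hx
    exact abs_of_neg (by omega)

lemma tendsto_atBot_or_atTop (hstep : ∀ x, |f (x + 1) - f x| ≤ K)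
    (hco : ∀ x y, |x - y| ≤ L * |f x - f y|) :
    Tendsto f atBot atBot ∨ Tendsto f atBot atTop := by
  have hstep' : ∀ x, |f (-(x + 1)) - f (-x)| ≤ K := fun x => by
    rw [abs_sub_comm]
    convert hstep (-(x + 1)) using 4
    ring
  have hco' : ∀ x y, |x - y| ≤ L * |f (-x) - f (-y)| := fun x y => by
    simpa only [neg_sub_neg, abs_sub_comm y x] using hco (-x) (-y)
  simp only [← tendsto_comp_neg_atTop_iff]
  exact (tendsto_atTop_or_atBot (f := fun x => f (-x)) hstep' hco').symm

lemma not_tendsto_sup_atTop_of_surjective (hf : Surjective f) :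
    ¬ Tendsto f (atBot ⊔ atTop) atTop := by
  intro h
  obtain ⟨x, hx⟩ := (continuous_of_discreteTopology (f := f)).exists_forall_le
    (by rwa [cocompact_eq_atBot_atTop])
  obtain ⟨y, hy⟩ := hf (f x - 1)
  have := hx y
  omega

lemma tendsto_or_tendsto_neg (hf : Surjective f) (hstep : ∀ x, |f (x + 1) - f x| ≤ K)
    (hco : ∀ x y, |x - y| ≤ L * |f x - f y|) :
    (Tendsto f atTop atTop ∧ Tendsto f atBot atBot) ∨
      (Tendsto (-f) atTop atTop ∧ Tendsto (-f) atBot atBot) := by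
  rcases tendsto_atTop_or_atBot hstep hco with h₁ | h₁ <;>
    rcases tendsto_atBot_or_atTop hstep hco with h₂ | h₂
  · exact .inl ⟨h₁, h₂⟩
  · exact absurd (tendsto_sup.2 ⟨h₂, h₁⟩) (not_tendsto_sup_atTop_of_surjective hf)
  · exact absurd
      (tendsto_sup.2 ⟨tendsto_neg_atBot_atTop.comp h₂, tendsto_neg_atBot_atTop.comp h₁⟩)
      (not_tendsto_sup_atTop_of_surjective (neg_surjective.comp hf))
  · exact .inr ⟨tendsto_neg_atBot_atTop.comp h₁, tendsto_neg_atTop_atBot.comp h₂⟩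

lemma exists_threshold (hstep : ∀ x, |f (x + 1) - f x| ≤ K)
    (hco : ∀ x y, |x - y| ≤ L * |f x - f y|)
    (htop : Tendsto f atTop atTop) (hbot : Tendsto f atBot atBot) (t : ℤ) :
    ∃ c, (∀ x, f x ≤ t → x ≤ c + |L| * K) ∧ (∀ x, t < f x → c - |L| * K ≤ x) := by
  -- `c` is any point where `f` enters `(t, t + K]`; every `x` has such a point on the side
  -- towards which `f` crosses `t`
  have right (x : ℤ) (hx : f x ≤ t) : ∃ w, x ≤ w ∧ t < f w ∧ f w ≤ t + K := by
    obtain ⟨v, hv, hxv⟩ := ((htop.eventually_gt_atTop t).and (eventually_ge_atTop x)).exists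
    obtain ⟨w, hxw, -, hw⟩ := exists_crossing hstep hxv hx hv
    exact ⟨w, hxw, hw⟩
  have left (x : ℤ) (hx : t < f x) : ∃ w, w ≤ x ∧ t < f w ∧ f w ≤ t + K := by
    obtain ⟨u, hu, hux⟩ := ((hbot.eventually_le_atBot t).and (eventually_le_atBot x)).exists
    obtain ⟨w, -, hwx, hw⟩ := exists_crossing hstep hux hu hx
    exact ⟨w, hwx, hw⟩
  have close (w w' : ℤ) (hw : t < f w ∧ f w ≤ t + K) (hw' : t < f w' ∧ f w' ≤ t + K) :
      w ≤ w' + |L| * K := by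
    have hK : |f w - f w'| ≤ K := abs_le.2 ⟨by omega, by omega⟩
    have := calc
      |w - w'| ≤ L * |f w - f w'| := hco w w'
      _ ≤ |L| * |f w - f w'| := by gcongr; exact le_abs_self L
      _ ≤ |L| * K := by gcongr
    have := le_abs_self (w - w')
    omega
  obtain ⟨u, hu⟩ := (hbot.eventually_le_atBot t).exists
  obtain ⟨c, -, hc⟩ := right u hu
  refine ⟨c, fun x hx => ?_, fun x hx => ?_⟩
  · obtain ⟨w, hxw, hw⟩ := right x hx
    have := close w c hw hc
    omega
  · obtain ⟨w, hwx, hw⟩ := left x hx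
    have := close c w hc hw
    omega

lemma exists_card_Icc_sdiff_preimage_le (hf : Bijective f) (hstep : ∀ x, |f (x + 1) - f x| ≤ K)
    (hco : ∀ x y, |x - y| ≤ L * |f x - f y|)
    (htop : Tendsto f atTop atTop) (hbot : Tendsto f atBot atBot) :
    ∃ C, ∀ n, #(Icc (-n) n \ (Icc (-n) n).preimage f hf.injective.injOn) ≤ C := by
  choose c hc using exists_threshold hstep hco htop hbot
  set D := |L| * K
  have hD : 0 ≤ D := mul_nonneg (abs_nonneg L) ((abs_nonneg _).trans (hstep 0))
  have spread (s t : ℤ) : (t - s).toNat ≤ (c t + D + 1 - (c s - D)).toNat := by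
    rw [← Int.card_Ioc, ← Int.card_Icc, ← card_preimage_of_bijective hf]
    refine card_le_card fun x hx => ?_
    simp only [mem_preimage, mem_Ioc, mem_Icc] at hx ⊢
    exact ⟨(hc s).2 x hx.1, (hc t).1 x hx.2⟩
  -- the thresholds grow at least linearly: `spread (-n - 1) 0` and `spread 0 n` put
  -- `c (-n - 1)` near `-n` and `c n` near `n`
  refine ⟨(c 0 + 3 * D + 1).toNat + (3 * D + 2 - c 0).toNat, fun n => ?_⟩
  set P := (Icc (-n) n).preimage f hf.injective.injOn
  have hcompl : Icc (-n) n \ P ⊆ Icc (-n) (c (-n - 1) + D) ∪ Icc (c n - D) n := by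
    intro x hx
    simp only [P, Finset.mem_sdiff, mem_preimage, mem_Icc, mem_union] at hx ⊢
    by_cases hxn : f x ≤ -n - 1
    · exact .inl ⟨hx.1.1, (hc (-n - 1)).1 x hxn⟩
    · exact .inr ⟨(hc n).2 x (by omega), hx.1.2⟩
  have h₁ := spread (-n - 1) 0
  have h₂ := spread 0 n
  have h₃ := (card_le_card hcompl).trans (card_union_le _ _)
  have h₄ := card_le_card (sdiff_subset : Icc (-n) n \ P ⊆ Icc (-n) n)
  simp only [Int.card_Icc] at h₃ h₄
  clear_value D
  omega

lemma tendsto_card_Icc_sdiff_preimage_div (hf : Bijective f)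
    (hK : ∀ x y, |f x - f y| ≤ K * |x - y|) (hco : ∀ x y, |x - y| ≤ L * |f x - f y|) :
    Tendsto (fun n : ℕ => (#(Icc (-n : ℤ) n \ (Icc (-n : ℤ) n).preimage f hf.injective.injOn) : ℝ)
      / #(Icc (-n : ℤ) n)) atTop (𝓝 0) := by
  have hstep (x : ℤ) : |f (x + 1) - f x| ≤ K := by simpa using hK (x + 1) x
  obtain ⟨C, hC⟩ : ∃ C, ∀ n, #(Icc (-n) n \ (Icc (-n) n).preimage f hf.injective.injOn) ≤ C := by
    rcases tendsto_or_tendsto_neg hf.surjective hstep hco with ⟨htop, hbot⟩ | ⟨htop, hbot⟩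
    · exact exists_card_Icc_sdiff_preimage_le hf hstep hco htop hbot
    · have hf' : Bijective (-f) := (Equiv.neg ℤ).bijective.comp hf
      obtain ⟨C, hC⟩ := exists_card_Icc_sdiff_preimage_le hf'
        (fun x => by simpa only [Pi.neg_apply, neg_sub_neg, abs_sub_comm] using hstep x)
        (fun x y => by simpa only [Pi.neg_apply, neg_sub_neg, abs_sub_comm] using hco x y) htop hbot
      refine ⟨C, fun n => le_of_eq_of_le ?_ (hC n)⟩
      congr 2
      ext x
      simp only [mem_preimage, mem_Icc, Pi.neg_apply]
      omega
  have hcard : Tendsto (fun n : ℕ => (#(Icc (-n : ℤ) n) : ℝ)) atTop atTop :=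
    tendsto_natCast_atTop_atTop.comp <|
      tendsto_atTop_mono (fun n => by simp [Int.card_Icc]; omega) tendsto_id
  refine squeeze_zero (fun n => by positivity) (fun n => ?_)
    ((tendsto_const_nhds (x := (C : ℝ))).div_atTop hcard)
  gcongr
  exact_mod_cast hC n

end BiLipschitz

/-- There exists a finitely additive probability measure on ℤ invariant under every
bi-Lipschitz bijection of ℤ. -/
theorem exists_invariant_mean_on_Z :
    ∃ μ : Set ℤ → ℝ,
      (∀ A : Set ℤ, 0 ≤ μ A) ∧
      μ Set.univ = 1 ∧
      (∀ A B : Set ℤ, Disjoint A B → μ (A ∪ B) = μ A + μ B) ∧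
      (∀ f : ℤ → ℤ, Function.Bijective f →
        (∃ K : ℤ, ∀ x y : ℤ, |f x - f y| ≤ K * |x - y|) →
        (∃ L : ℤ, ∀ x y : ℤ, |x - y| ≤ L * |f x - f y|) →
        ∀ A : Set ℤ, μ (f '' A) = μ A) := by
  let F (n : ℕ) : Finset ℤ := Icc (-n) n
  let U : Ultrafilter ℕ := .of atTop
  refine ⟨ultralimitDensity F U, ultralimitDensity_nonneg F U,
    ultralimitDensity_univ F U fun n => nonempty_Icc.2 (by omega),
    fun A B => ultralimitDensity_union F U, ?_⟩
  rintro f hf ⟨K, hK⟩ ⟨L, hL⟩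
  exact ultralimitDensity_image F U hf
    ((tendsto_card_Icc_sdiff_preimage_div hf hK hL).mono_left (Ultrafilter.of_le _))
end
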